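/- arXiv:2507.11871 — 7 statements merged into one kernel-verified Lean document; each statement's English description precedes it below -/
import Mathlib

section
/- Let G be a finite group with identity element e, let S be an inverse-closed subset of G∖{e}, and let C be a subset of G. Then (a) C is a perfect code in the Cayley graph Cay(G,S) if and only if (S ∪ {e}, C) is a factorization of G; and (b) C is a total perfect code in Cay(G,S) if and only if (S, C) is a factorization of G. -/
/-- The Cayley graph of a group `G` with connection set `S`.
(When `S` is inverse-closed and does not contain the identity, `x` and `y` are
adjacent iff `y * x⁻¹ ∈ S`.) -/
def cayleyMul {G : Type*} [Group G] (S : Set G) : SimpleGraph G :=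
  SimpleGraph.fromRel (fun x y => y * x⁻¹ ∈ S)

/-- A perfect code in a graph: an independent set such that every vertex outside it
has exactly one neighbour in it. -/
def IsPerfectCode {V : Type*} (Γ : SimpleGraph V) (C : Set V) : Prop :=
  (∀ x ∈ C, ∀ y ∈ C, ¬ Γ.Adj x y) ∧ ∀ v, v ∉ C → ∃! c, c ∈ C ∧ Γ.Adj v c

/-- A total perfect code in a graph: every vertex has exactly one neighbour in it. -/
def IsTotalPerfectCode {V : Type*} (Γ : SimpleGraph V) (C : Set V) : Prop :=
  ∀ v, ∃! c, c ∈ C ∧ Γ.Adj v c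

/-- `(A, B)` is a factorization of the group `G`: every element of `G` can be
uniquely written as `a * b` with `a ∈ A` and `b ∈ B`. -/
def IsFactorizationMul {G : Type*} [Group G] (A B : Set G) : Prop :=
  ∀ g : G, ∃! ab : G × G, ab.1 ∈ A ∧ ab.2 ∈ B ∧ ab.1 * ab.2 = g

/-- Lemma 2.1: for a finite group `G`, an inverse-closed subset `S` of `G ∖ {e}`
and `C ⊆ G`: (a) `C` is a perfect code in `Cay(G,S)` iff `(S ∪ {e}, C)` is a
factorization of `G`; (b) `C` is a total perfect code in `Cay(G,S)` iff `(S, C)`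
is a factorization of `G`. -/
theorem perfectCode_iff_factorization {G : Type*} [Group G] [Fintype G]
    (S : Set G) (h0 : (1 : G) ∉ S) (hinv : ∀ s ∈ S, s⁻¹ ∈ S) (C : Set G) :
    (IsPerfectCode (cayleyMul S) C ↔ IsFactorizationMul (S ∪ {1}) C) ∧
    (IsTotalPerfectCode (cayleyMul S) C ↔ IsFactorizationMul S C) := by
  have hadj : ∀ x y : G, (cayleyMul S).Adj x y ↔ y * x⁻¹ ∈ S := by
    intro x y
    simp only [cayleyMul, SimpleGraph.fromRel_adj]
    constructor
    · rintro ⟨hne, h | h⟩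
      · exact h
      · have := hinv _ h
        rwa [mul_inv_rev, inv_inv] at this
    · intro h
      refine ⟨fun he => ?_, Or.inl h⟩
      subst he; rw [mul_inv_cancel] at h; exact h0 h
  constructor
  · constructor
    · rintro ⟨hind, hcov⟩ g
      by_cases hg : g ∈ C
      · refine ⟨(1, g), ⟨Or.inr rfl, hg, one_mul g⟩, ?_⟩
        rintro ⟨a, b⟩ ⟨ha, hb, hab⟩
        rcases ha with ha | ha
        · exfalso
          apply hind b hb g hg
          rw [hadj]
          have : g * b⁻¹ = a := by rw [← hab]; group
          rw [this]; exact ha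
        · simp only [Set.mem_singleton_iff] at ha
          subst ha; rw [one_mul] at hab; subst hab; rfl
      · obtain ⟨c, ⟨hc, hac⟩, huniq⟩ := hcov g hg
        rw [hadj] at hac
        have hgc : g * c⁻¹ ∈ S := by
          have := hinv _ hac; rwa [mul_inv_rev, inv_inv] at this
        refine ⟨(g * c⁻¹, c), ⟨Or.inl hgc, hc, by group⟩, ?_⟩
        rintro ⟨a, b⟩ ⟨ha, hb, hab⟩
        rcases ha with ha | ha
        · have hb' : b = c := by
            apply huniq
            refine ⟨hb, ?_⟩
            rw [hadj]
            have : b * g⁻¹ = a⁻¹ := by rw [← hab]; group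
            rw [this]; exact hinv _ ha
          subst hb'
          have : a = g * b⁻¹ := by rw [← hab]; group
          simp [this]
        · simp only [Set.mem_singleton_iff] at ha
          subst ha; rw [one_mul] at hab; subst hab; exact absurd hb hg
    · intro hF
      constructor
      · intro x hx y hy hxy
        rw [hadj] at hxy
        obtain ⟨ab, _, huniq⟩ := hF y
        have h1 : ((y * x⁻¹, x) : G × G) = ab :=
          huniq _ ⟨Or.inl hxy, hx, by group⟩
        have h2 : ((1, y) : G × G) = ab := huniq _ ⟨Or.inr rfl, hy, one_mul y⟩
        have : y * x⁻¹ = 1 := by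
          have := h1.trans h2.symm
          exact (Prod.ext_iff.mp this).1
        rw [this] at hxy; exact h0 hxy
      · intro v hv
        obtain ⟨⟨a, b⟩, ⟨ha, hb, hab⟩, huniq⟩ := hF v
        rcases ha with ha | ha
        · refine ⟨b, ⟨hb, ?_⟩, ?_⟩
          · rw [hadj]
            have : b * v⁻¹ = a⁻¹ := by rw [← hab]; group
            rw [this]; exact hinv _ ha
          · intro c' ⟨hc', hvc'⟩
            rw [hadj] at hvc'
            have : c' * v⁻¹ ∈ S := hvc'
            have hS : v * c'⁻¹ ∈ S := by
              have := hinv _ this; rwa [mul_inv_rev, inv_inv] at this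
            have := huniq (v * c'⁻¹, c') ⟨Or.inl hS, hc', by group⟩
            exact (Prod.ext_iff.mp this).2
        · simp only [Set.mem_singleton_iff] at ha
          subst ha; rw [one_mul] at hab; subst hab; exact absurd hb hv
  · constructor
    · intro hT g
      obtain ⟨c, ⟨hc, hac⟩, huniq⟩ := hT g
      rw [hadj] at hac
      have hgc : g * c⁻¹ ∈ S := by
        have := hinv _ hac; rwa [mul_inv_rev, inv_inv] at this
      refine ⟨(g * c⁻¹, c), ⟨hgc, hc, by group⟩, ?_⟩
      rintro ⟨a, b⟩ ⟨ha, hb, hab⟩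
      have hb' : b = c := by
        apply huniq
        refine ⟨hb, ?_⟩
        rw [hadj]
        have : b * g⁻¹ = a⁻¹ := by rw [← hab]; group
        rw [this]; exact hinv _ ha
      subst hb'
      have : a = g * b⁻¹ := by rw [← hab]; group
      simp [this]
    · intro hF v
      obtain ⟨⟨a, b⟩, ⟨ha, hb, hab⟩, huniq⟩ := hF v
      refine ⟨b, ⟨hb, ?_⟩, ?_⟩
      · rw [hadj]
        have : b * v⁻¹ = a⁻¹ := by rw [← hab]; group
        rw [this]; exact hinv _ ha
      · intro c' ⟨hc', hvc'⟩
        rw [hadj] at hvc'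
        have hS : v * c'⁻¹ ∈ S := by
          have := hinv _ hvc'; rwa [mul_inv_rev, inv_inv] at this
        have := huniq (v * c'⁻¹, c') ⟨hS, hc', by group⟩
        exact (Prod.ext_iff.mp this).2
end

section
/- Let G be a good finite abelian group of order n and let p be a proper odd prime divisor of n (that is, p is an odd prime with p | n and p < n). Then for every subgroup H of G with |H| = n/p there exists an inverse-closed subset S of G∖{0} with |S| = p − 1 such that every coset of H is a perfect code in the Cayley graph Cay(G, S). -/
/-- The Cayley graph of an additive group `G` with connection set `S`.
(When `S` is inverse-closed and does not contain `0`, `x` and `y` are adjacent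
iff `y - x ∈ S`.) -/
def cayley {G : Type*} [AddGroup G] (S : Set G) : SimpleGraph G :=
  SimpleGraph.fromRel (fun x y => y - x ∈ S)

/-- The subgroup of periods of a subset `X` of an abelian group:
`{g | X + g = X}`. -/
def periods {G : Type*} [AddCommGroup G] (X : Set G) : AddSubgroup G where
  carrier := {g | ∀ x : G, x + g ∈ X ↔ x ∈ X}
  zero_mem' := by simp
  add_mem' := by
    intro a b ha hb x
    rw [← add_assoc]
    exact (hb _).trans (ha x)
  neg_mem' := by
    intro a ha x
    have := ha (x + -a)
    simpa using this.symm

/-- `(A, B)` is a factorization of the abelian group `G`: every element of `G` can be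
uniquely written as `a + b` with `a ∈ A` and `b ∈ B`. -/
def IsFactorization {G : Type*} [AddCommGroup G] (A B : Set G) : Prop :=
  ∀ g : G, ∃! ab : G × G, ab.1 ∈ A ∧ ab.2 ∈ B ∧ ab.1 + ab.2 = g

/-- An abelian group is good if in every factorization of it into two factors
at least one factor is periodic. -/
def IsGood (G : Type*) [AddCommGroup G] : Prop :=
  ∀ A B : Set G, IsFactorization A B → periods A ≠ ⊥ ∨ periods B ≠ ⊥

/-!
As the index `p` of `H` is odd, `G ⧸ H` has no element of order two, so its nonzero elements
split into pairs `{q, -q}`. Lifting one element of each pair to `G`, together with the negative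
of that lift, gives a symmetric set `S` of `p - 1` elements mapping bijectively onto the nonzero
cosets. No two elements of a coset `g + H` differ by an element of `S`, and a vertex `v` outside
`g + H` is adjacent to exactly one of its elements, namely `v + s` for the lift `s` of `g - v`.
-/
theorem eq_zero_of_neg_eq_self_of_odd_card {Q : Type*} [AddGroup Q] (hodd : Odd (Nat.card Q))
    {q : Q} (hq : -q = q) : q = 0 :=
  (Nat.Coprime.nsmul_right_bijective hodd.coprime_two_right).injective <| by
    simp only [two_nsmul, smul_zero]
    nth_rewrite 1 [← hq]
    exact neg_add_cancel q

section Transversal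

variable {G Q : Type*} [AddGroup G] [AddGroup Q]

theorem AddMonoidHom.exists_rightInverse_neg (f : G →+ Q) (hf : Function.Surjective f)
    (hQ : ∀ q : Q, -q = q → q = 0) :
    ∃ σ : Q → G, Function.RightInverse σ f ∧ ∀ q, σ (-q) = -σ q := by
  classical
  let _ : LinearOrder Q := IsWellOrder.linearOrder WellOrderingRel
  let σ : Q → G := fun q =>
    if q < -q then Function.surjInv hf q
    else if -q < q then -Function.surjInv hf (-q) else 0
  refine ⟨σ, fun q => ?_, fun q => ?_⟩
  · rcases lt_trichotomy q (-q) with h | h | h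
    · simp [σ, h, Function.surjInv_eq]
    · simp [σ, hQ q h.symm]
    · simp [σ, h, lt_asymm h, Function.surjInv_eq]
  · rcases lt_trichotomy q (-q) with h | h | h
    · simp [σ, h, lt_asymm h]
    · simp [σ, hQ q h.symm]
    · simp [σ, h, lt_asymm h]

theorem AddMonoidHom.exists_neg_closed_bijOn_compl_zero (f : G →+ Q)
    (hf : Function.Surjective f) (hQ : ∀ q : Q, -q = q → q = 0) :
    ∃ S : Set G, (∀ s ∈ S, -s ∈ S) ∧ Set.BijOn f S {0}ᶜ := by
  obtain ⟨σ, hσf, hσneg⟩ := f.exists_rightInverse_neg hf hQ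
  refine ⟨σ '' {0}ᶜ, ?_, ?_⟩
  · rintro _ ⟨q, hq, rfl⟩
    exact ⟨-q, neg_ne_zero.mpr hq, hσneg q⟩
  · refine ⟨?_, ?_, fun q hq => ⟨σ q, ⟨q, hq, rfl⟩, hσf q⟩⟩
    · rintro _ ⟨q, hq, rfl⟩
      rwa [Set.mem_compl_singleton_iff, hσf q]
    · rintro _ ⟨a, -, rfl⟩ _ ⟨b, -, rfl⟩ h
      rw [hσf a, hσf b] at h
      rw [h]

end Transversal

theorem cayley_adj_iff {G : Type*} [AddGroup G] {S : Set G} (h0 : (0 : G) ∉ S)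
    (hneg : ∀ s ∈ S, -s ∈ S) {x y : G} : (cayley S).Adj x y ↔ y - x ∈ S := by
  rw [cayley, SimpleGraph.fromRel_adj]
  refine ⟨fun ⟨_, h⟩ => h.elim id fun h => by simpa using hneg _ h, fun h => ⟨?_, .inl h⟩⟩
  rintro rfl
  exact h0 (by simpa using h)

theorem mem_image_add_left_iff_mk_eq {G : Type*} [AddGroup G] {H : AddSubgroup G} {g x : G} :
    x ∈ (g + ·) '' (H : Set G) ↔ (x : G ⧸ H) = g := by
  rw [Set.image_add_left, Set.mem_preimage, SetLike.mem_coe, eq_comm, QuotientAddGroup.eq]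

theorem isPerfectCode_coset_of_bijOn {G : Type*} [AddCommGroup G] {H : AddSubgroup G}
    {S : Set G} (hneg : ∀ s ∈ S, -s ∈ S)
    (hS : Set.BijOn (QuotientAddGroup.mk : G → G ⧸ H) S {0}ᶜ) (g : G) :
    IsPerfectCode (cayley S) ((g + ·) '' (H : Set G)) := by
  have h0 : (0 : G) ∉ S := fun h => hS.mapsTo h rfl
  simp only [IsPerfectCode, cayley_adj_iff h0 hneg, mem_image_add_left_iff_mk_eq]
  refine ⟨fun x hx y hy hxy => hS.mapsTo hxy (by simp [hx, hy]), fun v hv => ?_⟩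
  obtain ⟨s, hs, hsq⟩ := hS.surjOn (sub_ne_zero.mpr (Ne.symm hv) : (g - v : G ⧸ H) ≠ 0)
  refine ⟨v + s, ⟨by simp [hsq], by simpa using hs⟩, fun c ⟨hc, hcv⟩ => ?_⟩
  have hcs : c - v = s := hS.injOn hcv hs (by simp [hc, hsq])
  rw [← hcs, add_sub_cancel]

theorem AddSubgroup.index_eq_of_card_eq_card_div {G : Type*} [AddGroup G] [Finite G]
    {H : AddSubgroup G} {p : ℕ} (hdvd : p ∣ Nat.card G) (hH : Nat.card H = Nat.card G / p) :
    H.index = p := by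
  refine Nat.eq_of_mul_eq_mul_right (Nat.card_pos : 0 < Nat.card H) ?_
  rw [H.index_mul_card, hH, Nat.mul_div_cancel' hdvd]

theorem coset_perfectCode_of_good_general {G : Type*} [AddCommGroup G] [Fintype G]
    (n p : ℕ) (hn : Nat.card G = n) (hodd : Odd p) (hdvd : p ∣ n)
    (H : AddSubgroup G) (hH : Nat.card H = n / p) :
    ∃ S : Set G, (0 : G) ∉ S ∧ (∀ s ∈ S, -s ∈ S) ∧ S.ncard = p - 1 ∧
      ∀ g : G, IsPerfectCode (cayley S) ((g + ·) '' (H : Set G)) := by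
  subst hn
  have hindex : Nat.card (G ⧸ H) = p := H.index_eq_of_card_eq_card_div hdvd hH
  obtain ⟨S, hneg, hS⟩ := (QuotientAddGroup.mk' H).exists_neg_closed_bijOn_compl_zero
    (QuotientAddGroup.mk'_surjective H) fun _ => eq_zero_of_neg_eq_self_of_odd_card (hindex ▸ hodd)
  refine ⟨S, fun h => hS.mapsTo h rfl, hneg, ?_, isPerfectCode_coset_of_bijOn hneg hS⟩
  rw [hS.ncard_eq, Set.ncard_compl, Set.ncard_singleton, hindex]

/-- Theorem 3.1(a): let `G` be a good finite abelian group of order `n` and `p`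
a proper odd prime divisor of `n`. Then for every subgroup `H` of `G` of order
`n/p` there is an inverse-closed subset `S` of `G ∖ {0}` with `|S| = p - 1`
such that every coset of `H` is a perfect code in `Cay(G, S)`. -/
theorem coset_perfectCode_of_good {G : Type*} [AddCommGroup G] [Fintype G]
    (n p : ℕ) (hn : Nat.card G = n) (hgood : IsGood G)
    (hp : p.Prime) (hodd : Odd p) (hdvd : p ∣ n) (hlt : p < n)
    (H : AddSubgroup G) (hH : Nat.card H = n / p) :
    ∃ S : Set G, (0 : G) ∉ S ∧ (∀ s ∈ S, -s ∈ S) ∧ S.ncard = p - 1 ∧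
      ∀ g : G, IsPerfectCode (cayley S) ((g + ·) '' (H : Set G)) :=
  coset_perfectCode_of_good_general n p hn hodd hdvd H hH
end

section
/- Let G = ℤ_{n₁} × ⋯ × ℤ_{n_d} with all n_i ≥ 2, let S be an inverse-closed subset of G∖{(0,…,0)} with ⟨S⟩ = G, and set S₀ = S ∪ {(0,…,0)}. Suppose that |S₀| can be factorized as |S₀| = m₁m₂⋯m_d, where each m_i ≥ 1 is a divisor of n_i, such that for each pair of distinct elements (s₁,…,s_d), (s₁′,…,s_d′) of S₀ there exists at least one j ∈ {1,…,d} with s_j ≢ s_j′ (mod m_j). Then Cay(G, S) admits a perfect code; in fact C = (m₁ℤ_{n₁}) × ⋯ × (m_dℤ_{n_d}) is a perfect code in Cay(G, S). -/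
/-- Lemma 4.2: let `G = ℤ_{n₁} × ⋯ × ℤ_{n_d}` and `S` an inverse-closed generating
subset of `G ∖ {0}`, `S₀ = S ∪ {0}`. If `|S₀| = m₁⋯m_d` with each `m_i` a divisor
of `n_i`, and for each pair of distinct elements of `S₀` some coordinate `j`
satisfies `s_j ≢ s'_j (mod m_j)`, then `C = m₁ℤ_{n₁} × ⋯ × m_dℤ_{n_d}` is a
perfect code in `Cay(G, S)`. -/
theorem perfectCode_of_separation (d : ℕ) (hd : 1 ≤ d) (n : Fin d → ℕ)
    (hn : ∀ i, 2 ≤ n i) [∀ i, NeZero (n i)]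
    (S : Finset (∀ i, ZMod (n i))) (h0 : (0 : ∀ i, ZMod (n i)) ∉ S)
    (hinv : ∀ s ∈ S, -s ∈ S)
    (hgen : AddSubgroup.closure (S : Set (∀ i, ZMod (n i))) = ⊤)
    (m : Fin d → ℕ) (hm1 : ∀ i, 1 ≤ m i) (hmd : ∀ i, m i ∣ n i)
    (hcard : (insert 0 S).card = ∏ i, m i)
    (hsep : ∀ s ∈ insert 0 S, ∀ s' ∈ insert 0 S, s ≠ s' →
      ∃ j, ¬ ((s j).val ≡ (s' j).val [MOD m j])) :
    IsPerfectCode (cayley (S : Set (∀ i, ZMod (n i))))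
      {x : ∀ i, ZMod (n i) | ∀ i, ∃ y : ZMod (n i), x i = (m i : ZMod (n i)) * y} := by

  classical
  haveI : ∀ i, NeZero (m i) := fun i => ⟨Nat.one_le_iff_ne_zero.mp (hm1 i)⟩
  set φ : (∀ i, ZMod (n i)) → (∀ i, ZMod (m i)) :=
    fun x i => ZMod.castHom (hmd i) (ZMod (m i)) (x i) with hφ
  have φsub : ∀ a b, φ (a - b) = φ a - φ b := fun a b => funext fun i =>
    map_sub (ZMod.castHom (hmd i) (ZMod (m i))) (a i) (b i)
  have φzero : φ 0 = 0 := funext fun i => map_zero (ZMod.castHom (hmd i) (ZMod (m i)))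
  have hval : ∀ (x : ∀ i, ZMod (n i)) (i : Fin d),
      φ x i = (((x i).val : ℕ) : ZMod (m i)) := by
    intro x i
    simp [hφ, ZMod.natCast_val]
  have hC : ∀ x : ∀ i, ZMod (n i),
      (∀ i, ∃ y : ZMod (n i), x i = (m i : ZMod (n i)) * y) ↔ φ x = 0 := by
    intro x
    constructor
    · intro h
      funext i
      obtain ⟨y, hy⟩ := h i
      show ZMod.castHom (hmd i) (ZMod (m i)) (x i) = 0
      rw [hy, map_mul, map_natCast, ZMod.natCast_self, zero_mul]
    · intro h i
      have h2 := congrFun h i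
      rw [hval, Pi.zero_apply] at h2
      obtain ⟨k, hk⟩ := (ZMod.natCast_eq_zero_iff _ _).mp h2
      refine ⟨(k : ZMod (n i)), ?_⟩
      calc x i = (((x i).val : ℕ) : ZMod (n i)) := (ZMod.natCast_rightInverse (x i)).symm
        _ = ((m i * k : ℕ) : ZMod (n i)) := by rw [hk]
        _ = (m i : ZMod (n i)) * k := by push_cast; ring
  have hinj : Set.InjOn φ (insert 0 S : Finset _) := by
    intro s hs s' hs' h
    by_contra hne
    obtain ⟨j, hj⟩ := hsep s (by simpa using hs) s' (by simpa using hs') hne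
    apply hj
    have h2 := congrFun h j
    rw [hval, hval] at h2
    exact (ZMod.natCast_eq_natCast_iff _ _ _).mp h2
  have hsurj : ∀ t : ∀ i, ZMod (m i), ∃ s ∈ insert 0 S, φ s = t := by
    intro t
    have hcard2 : ((insert 0 S).image φ).card = Fintype.card (∀ i, ZMod (m i)) := by
      rw [Finset.card_image_of_injOn hinj, hcard, Fintype.card_pi]
      simp [ZMod.card]
    have huniv : (insert 0 S).image φ = Finset.univ :=
      Finset.eq_univ_of_card _ hcard2
    have ht : t ∈ (insert 0 S).image φ := huniv ▸ Finset.mem_univ t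
    obtain ⟨s, hs, hst⟩ := Finset.mem_image.mp ht
    exact ⟨s, hs, hst⟩
  constructor
  · rintro x hx y hy ⟨hne, hadj⟩
    have hx0 : φ x = 0 := (hC x).mp hx
    have hy0 : φ y = 0 := (hC y).mp hy
    rcases hadj with h | h
    · have : y - x = 0 := hinj (by simp [h]) (by simp)
        (by rw [φsub, hx0, hy0, φzero]; ring)
      exact hne (by linear_combination -this)
    · have : x - y = 0 := hinj (by simp [h]) (by simp)
        (by rw [φsub, hx0, hy0, φzero]; ring)
      exact hne (by linear_combination this)
  · intro v hv
    have hv0 : φ v ≠ 0 := fun h => hv ((hC v).mpr h)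
    obtain ⟨s, hs, hst⟩ := hsurj (φ v)
    have hs0 : s ≠ 0 := by
      rintro rfl
      exact hv0 (by rw [← hst, φzero])
    have hsS : s ∈ S := by
      rcases Finset.mem_insert.mp hs with h | h
      · exact absurd h hs0
      · exact h
    refine ⟨v - s, ⟨?_, ?_, ?_⟩, ?_⟩
    · exact (hC _).mpr (by rw [φsub, hst]; ring)
    · intro h
      apply hs0
      have : v - s = v - 0 := by rw [← h]; ring
      exact sub_right_injective this
    · right
      show v - (v - s) ∈ (S : Set _)
      simpa using hsS
    · rintro c ⟨hcC, hcne, hcadj⟩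
      have hs' : v - c ∈ S := by
        rcases hcadj with h | h
        · have := hinv _ h
          simpa using this
        · exact h
      have hφ' : φ (v - c) = φ v := by
        rw [φsub, (hC c).mp hcC]; ring
      have : v - c = s := hinj (by simp [hs']) hs (by rw [hφ', hst])
      linear_combination -this
end

section
/- Let G = ℤ_{n₁} × ⋯ × ℤ_{n_d} with all n_i ≥ 2, let S be an inverse-closed subset of G∖{(0,…,0)} with ⟨S⟩ = G, and set S₀ = S ∪ {(0,…,0)}. Suppose that |S₀| = p is a prime and exactly one of n₁,…,n_d, say n_t, is divisible by p. Then Cay(G, S) admits a perfect code if and only if s_t ≢ s_t′ (mod p) for each pair of distinct elements (s₁,…,s_d), (s₁′,…,s_d′) of S₀. -/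
section PCaux

open Polynomial Finset

noncomputable def PCgs (N : ℕ) : ℤ[X] := ∑ i ∈ Finset.range N, X ^ i

lemma PCgs_eval_one (N : ℕ) : (PCgs N).eval 1 = N := by
  simp [PCgs, eval_finset_sum]

lemma PCgs_mul_X_sub_one (N : ℕ) : PCgs N * (X - 1) = (X:ℤ[X]) ^ N - 1 :=
  geom_sum_mul X N

lemma PC_X_pow_mod_dvd (N m : ℕ) : ((X:ℤ[X]) ^ N - 1) ∣ X ^ m - X ^ (m % N) := by
  have h : (X:ℤ[X]) ^ m = X ^ (m % N) * ((X:ℤ[X]) ^ N) ^ (m / N) := by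
    rw [← pow_mul, ← pow_add]
    congr 1
    exact (Nat.mod_add_div m N).symm
  rw [h]
  have h2 : ((X:ℤ[X]) ^ N - 1) ∣ ((X:ℤ[X]) ^ N) ^ (m / N) - 1 := by
    simpa using sub_dvd_pow_sub_pow ((X:ℤ[X]) ^ N) 1 (m / N)
  have h3 := h2.mul_left ((X:ℤ[X]) ^ (m % N))
  simpa [mul_sub, mul_one] using h3

lemma PCgs_mul (a b : ℕ) : PCgs (a * b) = PCgs a * ∑ m ∈ Finset.range b, X ^ (a * m) := by
  induction b with
  | zero => simp [PCgs]
  | succ b ih =>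
    rw [Nat.mul_succ, PCgs, Finset.sum_range_add, ← PCgs, ih, Finset.sum_range_succ, mul_add]
    congr 1
    rw [PCgs, Finset.sum_mul]
    exact Finset.sum_congr rfl fun i hi => by rw [← pow_add, add_comm (a*b) i]

lemma PC_coeff_sum_X_pow {α : Type*} [DecidableEq α] (s : Finset α) (m : α → ℕ) (e : ℕ) :
    (∑ a ∈ s, (X:ℤ[X]) ^ (m a)).coeff e = (s.filter (fun a => m a = e)).card := by
  rw [Polynomial.finset_sum_coeff]
  rw [Finset.card_filter]
  push_cast
  exact Finset.sum_congr rfl fun a _ => by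
    rw [Polynomial.coeff_X_pow]
    by_cases h : m a = e
    · simp [h]
    · rw [if_neg (fun hh => h hh.symm), if_neg h]

lemma PC_eval_one_sum_X_pow {α : Type*} (s : Finset α) (m : α → ℕ) :
    (∑ a ∈ s, (X:ℤ[X]) ^ (m a)).eval 1 = s.card := by
  simp [eval_finset_sum]

lemma PC_natDegree_sum_X_pow {α : Type*} (s : Finset α) (m : α → ℕ) (B : ℕ)
    (h : ∀ a ∈ s, m a ≤ B) : (∑ a ∈ s, (X:ℤ[X]) ^ (m a)).natDegree ≤ B := by
  exact Polynomial.natDegree_sum_le_of_forall_le s _ fun a ha => by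
    simpa [Polynomial.natDegree_X_pow] using h a ha

lemma PC_sum_one_structure (M : ℕ) (c : ℕ → ℤ) (h0 : ∀ r, 0 ≤ c r)
    (h1 : ∑ r ∈ Finset.range M, c r = 1) :
    ∃ r0 < M, c r0 = 1 ∧ ∀ r < M, r ≠ r0 → c r = 0 := by
  have hex : ∃ r ∈ Finset.range M, 0 < c r := by
    by_contra h
    push_neg at h
    have : ∑ r ∈ Finset.range M, c r ≤ 0 := Finset.sum_nonpos h
    omega
  obtain ⟨r0, hr0m, hr0⟩ := hex
  have hsplit : ∑ r ∈ (Finset.range M).erase r0, c r + c r0 = 1 := by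
    rw [Finset.sum_erase_add _ _ hr0m]; exact h1
  have hrest : 0 ≤ ∑ r ∈ (Finset.range M).erase r0, c r :=
    Finset.sum_nonneg fun r _ => h0 r
  have hc1 : c r0 = 1 := by omega
  have hz : ∑ r ∈ (Finset.range M).erase r0, c r = 0 := by omega
  have hall := (Finset.sum_eq_zero_iff_of_nonneg fun r _ => h0 r).mp hz
  refine ⟨r0, Finset.mem_range.mp hr0m, hc1, fun r hrM hrne => ?_⟩
  exact hall r (Finset.mem_erase.mpr ⟨hrne, Finset.mem_range.mpr hrM⟩)

lemma PC_divisor_analysis {α : Type*} [DecidableEq α] {p j : ℕ} (hp : p.Prime) (hj : 1 ≤ j)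
    (s : Finset α) (m : α → ℕ) (hm : ∀ a ∈ s, m a < p ^ j) (hcard : s.card = p)
    (hdvd : cyclotomic (p ^ j) ℤ ∣ ∑ a ∈ s, X ^ (m a)) :
    ∃ r0 < p ^ (j - 1), ∀ e < p ^ j,
      (((s.filter (fun a => m a = e)).card : ℤ) = if e % p ^ (j - 1) = r0 then 1 else 0) := by
  set M := p ^ (j - 1) with hM
  set F : ℤ[X] := ∑ a ∈ s, X ^ (m a) with hF
  have hppos : 0 < p := hp.pos
  have hM1 : 1 ≤ M := Nat.one_le_iff_ne_zero.mpr (pow_ne_zero _ (by omega))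
  have hpj : p ^ j = M * p := by rw [hM, ← pow_succ]; congr 1; omega
  have hMlt : M < p ^ j := by
    rw [hpj]; nlinarith [hp.two_le, hM1]
  have hΦ : cyclotomic (p ^ j) ℤ = ∑ l ∈ Finset.range p, ((X:ℤ[X]) ^ M) ^ l := by
    have h1 : p ^ j = p ^ ((j - 1) + 1) := by congr 1; omega
    rw [h1, cyclotomic_prime_pow_eq_geom_sum hp]
  have hΦdeg : (cyclotomic (p ^ j) ℤ).natDegree = p ^ j - M := by
    rw [natDegree_cyclotomic, Nat.totient_prime_pow hp (by omega)]
    rw [hpj, ← hM, Nat.mul_sub, mul_one]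
  have hΦeval : (cyclotomic (p ^ j) ℤ).eval 1 = p := by
    rw [hΦ]; simp [eval_finset_sum]
  obtain ⟨Q, hFQ⟩ := hdvd
  have hF1 : F.eval 1 = (s.card : ℤ) := PC_eval_one_sum_X_pow s m
  have hFne : F ≠ 0 := by
    intro h
    rw [h] at hF1
    simp [hcard] at hF1
    omega
  have hQne : Q ≠ 0 := by
    rintro rfl
    rw [mul_zero] at hFQ
    exact hFne hFQ
  have hΦne : cyclotomic (p ^ j) ℤ ≠ 0 := cyclotomic_ne_zero _ ℤ
  have hdegF : F.natDegree ≤ p ^ j - 1 :=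
    PC_natDegree_sum_X_pow s m _ (fun a ha => by have := hm a ha; omega)
  have hdegmul : F.natDegree = (p ^ j - M) + Q.natDegree := by
    rw [hFQ, natDegree_mul hΦne hQne, hΦdeg]
  have hdegQ : Q.natDegree < M := by omega
  have hcoeff : ∀ l < p, ∀ r < M, F.coeff (M * l + r) = Q.coeff r := by
    intro l hl r hr
    have hFQ' : F = ∑ l' ∈ Finset.range p, Q * X ^ (M * l') := by
      rw [hFQ, hΦ, Finset.sum_mul]
      exact Finset.sum_congr rfl fun l' _ => by rw [← pow_mul, mul_comm]
    rw [hFQ', Polynomial.finset_sum_coeff]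
    rw [Finset.sum_eq_single l]
    · rw [coeff_mul_X_pow' Q (M * l) (M * l + r), if_pos (Nat.le_add_right _ _)]
      congr 1
      omega
    · intro l' hl' hne
      rw [coeff_mul_X_pow']
      rcases lt_or_gt_of_ne hne with h | h
      · have h5 : M * l' + M ≤ M * l := by
          have := Nat.mul_le_mul_left M (show l' + 1 ≤ l by omega)
          simpa [Nat.mul_succ] using this
        rw [if_pos (by omega)]
        apply Polynomial.coeff_eq_zero_of_natDegree_lt
        omega
      · have h5 : M * l + M ≤ M * l' := by
          have := Nat.mul_le_mul_left M (show l + 1 ≤ l' by omega)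
          simpa [Nat.mul_succ] using this
        rw [if_neg (by omega)]
    · intro h
      exact absurd (Finset.mem_range.mpr hl) h
  have hQval : ∀ r < M, Q.coeff r = ((s.filter (fun a => m a = r)).card : ℤ) := by
    intro r hr
    have := hcoeff 0 hppos r hr
    rw [mul_zero, zero_add] at this
    rw [← this, hF, PC_coeff_sum_X_pow]
  have hQnonneg : ∀ r, 0 ≤ Q.coeff r := by
    intro r
    by_cases h : r < M
    · rw [hQval r h]; positivity
    · rw [Polynomial.coeff_eq_zero_of_natDegree_lt (by omega)]
  have hQ1 : Q.eval 1 = 1 := by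
    have h1 : F.eval 1 = (cyclotomic (p ^ j) ℤ).eval 1 * Q.eval 1 := by
      rw [hFQ, eval_mul]
    rw [hF1, hcard, hΦeval] at h1
    have hp0 : (p : ℤ) ≠ 0 := by exact_mod_cast hp.ne_zero
    have h2 := mul_left_cancel₀ hp0 (show (p:ℤ) * 1 = (p:ℤ) * Q.eval 1 by rw [mul_one]; exact h1)
    exact h2.symm
  have hQsum : ∑ r ∈ Finset.range M, Q.coeff r = 1 := by
    have := Polynomial.eval_eq_sum_range' (show Q.natDegree < M by omega) (1:ℤ)
    rw [hQ1] at this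
    simpa [one_pow, mul_one] using this.symm
  obtain ⟨r0, hr0M, hr01, hr00⟩ := PC_sum_one_structure M Q.coeff hQnonneg hQsum
  refine ⟨r0, hr0M, fun e he => ?_⟩
  have hdiv : e / M < p := by
    rw [Nat.div_lt_iff_lt_mul (by omega)]
    calc e < p ^ j := he
    _ = M * p := hpj
    _ ≤ p * M := by rw [mul_comm]
  have hmod : e % M < M := Nat.mod_lt _ (by omega)
  have heq : e = M * (e / M) + e % M := (Nat.div_add_mod e M).symm
  have := hcoeff (e / M) hdiv (e % M) hmod
  rw [← heq] at this
  rw [PC_coeff_sum_X_pow] at this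
  rw [this]
  by_cases h : e % M = r0
  · rw [if_pos h, h, hr01]
  · rw [if_neg h, hr00 _ hmod h]

lemma PC_tile_dvd {G : Type*} [Fintype G] [AddCommGroup G] [DecidableEq G]
    (A C : Finset G) (e : G → ℕ) (N : ℕ)
    (he : ∀ a c : G, e (a + c) = (e a + e c) % N)
    (htile : ∀ g : G, ∃! ac : G × G, ac.1 ∈ A ∧ ac.2 ∈ C ∧ ac.1 + ac.2 = g) :
    ((X:ℤ[X]) ^ N - 1) ∣
      (∑ a ∈ A, X ^ (e a)) * (∑ c ∈ C, X ^ (e c)) - ∑ g : G, X ^ (e g) := by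
  rw [Finset.sum_mul_sum]
  have hsum : (∑ g : G, (X:ℤ[X]) ^ (e g)) =
      ∑ ac ∈ A ×ˢ C, X ^ (e (ac.1 + ac.2)) := by
    refine (Finset.sum_bij (fun ac _ => ac.1 + ac.2) ?_ ?_ ?_ ?_).symm
    · intro ac _; exact Finset.mem_univ _
    · intro ac hac ac' hac' heq
      simp only [Finset.mem_product] at hac hac'
      exact (htile (ac.1 + ac.2)).unique ⟨hac.1, hac.2, rfl⟩ ⟨hac'.1, hac'.2, heq.symm⟩
    · intro g _
      obtain ⟨ac, ⟨h1, h2, h3⟩, _⟩ := htile g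
      exact ⟨ac, Finset.mem_product.mpr ⟨h1, h2⟩, h3⟩
    · intro ac _; rfl
  rw [hsum, ← Finset.sum_product', ← Finset.sum_sub_distrib]
  apply Finset.dvd_sum
  intro ac _
  rw [← pow_add, he]
  exact PC_X_pow_mod_dvd N _

lemma PC_sum_range_mod {M : Type*} [AddCommMonoid M] (h : ℕ → M) (N q : ℕ) :
    ∑ v ∈ Finset.range (N * q), h (v % N) = q • ∑ r ∈ Finset.range N, h r := by
  induction q with
  | zero => simp
  | succ q ih =>
    rw [Nat.mul_succ, Finset.sum_range_add, ih, succ_nsmul]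
    congr 1
    refine Finset.sum_congr rfl fun i hi => ?_
    congr 1
    rw [Finset.mem_range] at hi
    rw [add_comm, Nat.add_mul_mod_self_left, Nat.mod_eq_of_lt hi]

lemma PC_zmod_sum_val {M : Type*} [AddCommMonoid M] (m : ℕ) [NeZero m] (h : ℕ → M) :
    ∑ x : ZMod m, h x.val = ∑ v ∈ Finset.range m, h v := by
  refine Finset.sum_nbij' (fun x => x.val) (fun v => (v : ZMod m)) ?_ ?_ ?_ ?_ ?_
  · intro x _; exact Finset.mem_range.mpr (ZMod.val_lt x)
  · intro v _; exact Finset.mem_univ _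
  · intro x _; exact ZMod.natCast_rightInverse x
  · intro v hv; exact ZMod.val_cast_of_lt (Finset.mem_range.mp hv)
  · intro x _; rfl

lemma PC_gs_dvd_sum_pi {d : ℕ} (n : Fin d → ℕ) [∀ i, NeZero (n i)] (t : Fin d)
    (N : ℕ) (hN : N ∣ n t) :
    PCgs N ∣ ∑ g : (∀ i, ZMod (n i)), (X:ℤ[X]) ^ ((g t).val % N) := by
  classical
  set F : ZMod (n t) → ℤ[X] := fun x => (X:ℤ[X]) ^ (x.val % N) with hFdef
  set c0 := Fintype.card (∀ j : {j // j ≠ t}, ZMod (n j)) with hc0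
  have hsplit : ∑ g : (∀ i, ZMod (n i)), F (g t) = c0 • ∑ x : ZMod (n t), F x := by
    rw [← (Equiv.piSplitAt t (fun i => ZMod (n i))).symm.sum_comp (fun g => F (g t))]
    rw [Fintype.sum_prod_type]
    have : ∀ (x : ZMod (n t)) (y : ∀ j : {j // j ≠ t}, ZMod (n j)),
        F (((Equiv.piSplitAt t (fun i => ZMod (n i))).symm (x, y)) t) = F x := by
      intro x y
      congr 1
      simp [Equiv.piSplitAt_symm_apply]
    simp only [this]
    rw [Finset.smul_sum]
    refine Finset.sum_congr rfl fun x _ => ?_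
    rw [Finset.sum_const, Finset.card_univ]
  have hzm : ∑ x : ZMod (n t), F x = (n t / N) • PCgs N := by
    rw [hFdef]
    rw [PC_zmod_sum_val (n t) (fun v => (X:ℤ[X]) ^ (v % N))]
    have hnt : n t = N * (n t / N) := (Nat.mul_div_cancel' hN).symm
    rw [show Finset.range (n t) = Finset.range (N * (n t / N)) by rw [← hnt]]
    exact PC_sum_range_mod _ N (n t / N)
  rw [hsplit, hzm, smul_smul, nsmul_eq_mul]
  exact dvd_mul_left _ _

lemma PC_gs_prod_cyclotomic (p : ℕ) (hp : p.Prime) (k : ℕ) :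
    PCgs (p ^ k) = ∏ j ∈ Finset.range k, cyclotomic (p ^ (j + 1)) ℤ := by
  induction k with
  | zero => simp [PCgs]
  | succ k ih =>
    rw [pow_succ, PCgs_mul, ih, Finset.prod_range_succ]
    congr 1
    rw [cyclotomic_prime_pow_eq_geom_sum hp]
    exact Finset.sum_congr rfl fun i _ => by rw [← pow_mul]

lemma PC_prod_dvd_of_dvd (F : ℤ[X]) (f : ℕ → ℤ[X]) (k : ℕ)
    (hpr : ∀ j < k, Prime (f j))
    (hnd : ∀ i j, i < k → j < k → i ≠ j → ¬ f i ∣ f j)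
    (hdvd : ∀ j < k, f j ∣ F) : (∏ j ∈ Finset.range k, f j) ∣ F := by
  induction k with
  | zero => simpa using one_dvd F
  | succ k ih =>
    obtain ⟨W, hW⟩ := ih (fun j hj => hpr j (by omega))
      (fun i j hi hj => hnd i j (by omega) (by omega)) (fun j hj => hdvd j (by omega))
    have hk : f k ∣ W := by
      have h1 : f k ∣ (∏ j ∈ Finset.range k, f j) * W := hW ▸ hdvd k (by omega)
      rcases (hpr k (by omega)).dvd_mul.mp h1 with h | h
      · obtain ⟨j, hj, hdj⟩ := (hpr k (by omega)).exists_mem_finset_dvd h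
        rw [Finset.mem_range] at hj
        exact absurd hdj (hnd k j (by omega) (by omega) (by omega))
      · exact h
    obtain ⟨W', hW'⟩ := hk
    rw [Finset.prod_range_succ]
    exact ⟨W', by rw [hW, hW', mul_assoc]⟩

def PCphi {d : ℕ} (n : Fin d → ℕ) [∀ i, NeZero (n i)] (t : Fin d) (p : ℕ)
    (h : p ∣ n t) : (∀ i, ZMod (n i)) →+ ZMod p :=
  (ZMod.castHom h (ZMod p)).toAddMonoidHom.comp
    (Pi.evalAddMonoidHom (fun i => ZMod (n i)) t)

lemma PCphi_apply {d : ℕ} (n : Fin d → ℕ) [∀ i, NeZero (n i)] (t : Fin d) (p : ℕ)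
    (h : p ∣ n t) (g : ∀ i, ZMod (n i)) :
    PCphi n t p h g = (((g t).val : ℕ) : ZMod p) := by
  simp [PCphi, ZMod.castHom_apply, ZMod.natCast_val]

lemma PCphi_eq_iff {d : ℕ} (n : Fin d → ℕ) [∀ i, NeZero (n i)] (t : Fin d) (p : ℕ)
    (h : p ∣ n t) (g g' : ∀ i, ZMod (n i)) :
    PCphi n t p h g = PCphi n t p h g' ↔ (g t).val ≡ (g' t).val [MOD p] := by
  rw [PCphi_apply, PCphi_apply, ZMod.natCast_eq_natCast_iff]

lemma PCphi_eq_zero_iff {d : ℕ} (n : Fin d → ℕ) [∀ i, NeZero (n i)] (t : Fin d) (p : ℕ)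
    (hp : p.Prime) (h : p ∣ n t) (g : ∀ i, ZMod (n i)) :
    PCphi n t p h g = 0 ↔ p ∣ (g t).val := by
  haveI : NeZero p := ⟨hp.ne_zero⟩
  rw [PCphi_apply, ZMod.natCast_eq_zero_iff]

lemma PC_gen_contradiction {d : ℕ} (n : Fin d → ℕ) [∀ i, NeZero (n i)] (t : Fin d)
    (p : ℕ) (hp : p.Prime) (h : p ∣ n t)
    (S : Finset (∀ i, ZMod (n i)))
    (hgen : AddSubgroup.closure (S : Set (∀ i, ZMod (n i))) = ⊤)
    (hall : ∀ s ∈ S, p ∣ ((s t).val)) : False := by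
  classical
  haveI : Fact (1 < p) := ⟨hp.one_lt⟩
  have hker : AddSubgroup.closure (S : Set (∀ i, ZMod (n i))) ≤ (PCphi n t p h).ker := by
    rw [AddSubgroup.closure_le]
    intro s hs
    rw [SetLike.mem_coe, AddMonoidHom.mem_ker, PCphi_eq_zero_iff n t p hp h]
    exact hall s hs
  rw [hgen] at hker
  have h1 : PCphi n t p h (Pi.single t 1) = 0 :=
    AddMonoidHom.mem_ker.mp (hker (AddSubgroup.mem_top _))
  rw [PCphi_apply] at h1
  rw [Pi.single_eq_same] at h1
  have hv : (1 : ZMod (n t)).val = 1 := by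
    haveI : Fact (1 < n t) := ⟨by
      have h2 := Nat.le_of_dvd (Nat.pos_of_ne_zero (NeZero.ne (n t))) h
      have h3 := hp.two_le
      omega⟩
    exact ZMod.val_one _
  rw [hv] at h1
  simp at h1

lemma PC_cayley_adj {G : Type*} [AddCommGroup G] (S : Finset G) (x y : G) :
    (cayley (S : Set G)).Adj x y ↔ x ≠ y ∧ (y - x ∈ S ∨ x - y ∈ S) := by
  rw [cayley, SimpleGraph.fromRel_adj]
  simp

lemma PC_code_to_tile {G : Type*} [AddCommGroup G] [DecidableEq G]
    (S : Finset G) (hinv : ∀ s ∈ S, -s ∈ S)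
    (C : Set G) (hC : IsPerfectCode (cayley (S : Set G)) C) (Cfin : Finset G)
    (hCfin : ∀ x, x ∈ Cfin ↔ x ∈ C) :
    ∀ g : G, ∃! ac : G × G, ac.1 ∈ insert 0 S ∧ ac.2 ∈ Cfin ∧ ac.1 + ac.2 = g := by
  intro g
  by_cases hg : g ∈ C
  · refine ⟨(0, g), ⟨Finset.mem_insert_self _ _, (hCfin g).mpr hg, zero_add g⟩, ?_⟩
    rintro ⟨a, c⟩ ⟨ha, hc, hsum⟩
    simp only at ha hc hsum
    by_cases ha0 : a = 0
    · subst ha0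
      rw [zero_add] at hsum
      rw [hsum]
    · have haS : a ∈ S := (Finset.mem_insert.mp ha).resolve_left ha0
      have hcC : c ∈ C := (hCfin c).mp hc
      have hcg : c ≠ g := by
        intro h
        apply ha0
        rw [h] at hsum
        have : a + g = 0 + g := by rw [hsum, zero_add]
        exact add_right_cancel this
      have hadj : (cayley (S : Set G)).Adj c g := by
        rw [PC_cayley_adj]
        refine ⟨hcg, Or.inl ?_⟩
        have : g - c = a := by rw [← hsum, add_sub_cancel_right]
        rw [this]; exact haS
      exact absurd hadj (hC.1 c hcC g hg)
  · obtain ⟨c, ⟨hcC, hcadj⟩, hcu⟩ := hC.2 g hg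
    rw [PC_cayley_adj] at hcadj
    obtain ⟨hne, hor⟩ := hcadj
    have hgc : g - c ∈ S := by
      rcases hor with h | h
      · have := hinv _ h
        rwa [neg_sub] at this
      · exact h
    refine ⟨(g - c, c), ⟨Finset.mem_insert_of_mem hgc, (hCfin c).mpr hcC,
      sub_add_cancel g c⟩, ?_⟩
    rintro ⟨a, c'⟩ ⟨ha, hc', hsum⟩
    simp only at ha hc' hsum
    have hc'C : c' ∈ C := (hCfin c').mp hc'
    have ha0 : a ≠ 0 := by
      rintro rfl
      rw [zero_add] at hsum
      exact hg (hsum ▸ hc'C)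
    have haS : a ∈ S := (Finset.mem_insert.mp ha).resolve_left ha0
    have hgc' : g ≠ c' := by
      intro h
      apply ha0
      rw [← h] at hsum
      have : a + g = 0 + g := by rw [hsum, zero_add]
      exact add_right_cancel this
    have hadj : (cayley (S : Set G)).Adj g c' := by
      rw [PC_cayley_adj]
      refine ⟨hgc', Or.inr ?_⟩
      have : g - c' = a := by rw [← hsum, add_sub_cancel_right]
      rw [this]; exact haS
    have hcc : c' = c := hcu c' ⟨hc'C, hadj⟩
    subst hcc
    have : a = g - c' := by rw [← hsum, add_sub_cancel_right]
    rw [this]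

end PCaux

lemma main_forward (d : ℕ) (n : Fin d → ℕ)
    (hn : ∀ i, 2 ≤ n i) [∀ i, NeZero (n i)]
    (S : Finset (∀ i, ZMod (n i))) (h0 : (0 : ∀ i, ZMod (n i)) ∉ S)
    (hinv : ∀ s ∈ S, -s ∈ S)
    (hgen : AddSubgroup.closure (S : Set (∀ i, ZMod (n i))) = ⊤)
    (p : ℕ) (hp : p.Prime) (hcard : (insert 0 S).card = p)
    (t : Fin d) (ht : p ∣ n t) (huniq : ∀ i, p ∣ n i → i = t)
    (C : Set (∀ i, ZMod (n i)))
    (hC : IsPerfectCode (cayley (S : Set (∀ i, ZMod (n i)))) C)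
    (s : ∀ i, ZMod (n i)) (hs : s ∈ insert 0 S)
    (s' : ∀ i, ZMod (n i)) (hs' : s' ∈ insert 0 S) (hsne : s ≠ s')
    (hmod : (s t).val ≡ (s' t).val [MOD p]) : False := by
  classical
  haveI hfact : Fact p.Prime := ⟨hp⟩
  have hppos := hp.pos
  set k := padicValNat p (n t) with hkdef
  have hNt : p ^ k ∣ n t := pow_padicValNat_dvd
  have hntne : n t ≠ 0 := by have := hn t; omega
  set N := p ^ k with hNdef
  have hN0 : 0 < N := pow_pos hppos k
  set Cfin : Finset (∀ i, ZMod (n i)) := (Set.toFinite C).toFinset with hCfdef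
  have hCfin : ∀ x, x ∈ Cfin ↔ x ∈ C := fun x => Set.Finite.mem_toFinset _
  have htile := PC_code_to_tile S hinv C hC Cfin hCfin
  set e : (∀ i, ZMod (n i)) → ℕ := fun g => (g t).val % N with hedef
  have he : ∀ a c : (∀ i, ZMod (n i)), e (a + c) = (e a + e c) % N := by
    intro a c
    show ((a + c) t).val % N = ((a t).val % N + (c t).val % N) % N
    rw [Pi.add_apply, ZMod.val_add, Nat.mod_mod_of_dvd _ hNt, Nat.add_mod]
  set PA : Polynomial ℤ := ∑ a ∈ insert 0 S, Polynomial.X ^ (e a) with hPAdef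
  set PCp : Polynomial ℤ := ∑ c ∈ Cfin, Polynomial.X ^ (e c) with hPCdef
  set T : Polynomial ℤ := ∑ g : (∀ i, ZMod (n i)), Polynomial.X ^ (e g) with hTdef
  have hD : ((Polynomial.X : Polynomial ℤ) ^ N - 1) ∣ PA * PCp - T :=
    PC_tile_dvd (insert 0 S) Cfin e N he htile
  have hT : PCgs N ∣ T := PC_gs_dvd_sum_pi n t N hNt
  have hXN : PCgs N ∣ (Polynomial.X : Polynomial ℤ) ^ N - 1 :=
    ⟨_, (PCgs_mul_X_sub_one N).symm⟩
  have hPA1 : PA.eval 1 = (p : ℤ) := by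
    rw [hPAdef, PC_eval_one_sum_X_pow, hcard]
  have hPC1 : PCp.eval 1 = (Cfin.card : ℤ) := by
    rw [hPCdef, PC_eval_one_sum_X_pow]
  have hT1 : T.eval 1 = (Fintype.card (∀ i, ZMod (n i)) : ℤ) := by
    rw [hTdef, PC_eval_one_sum_X_pow, Finset.card_univ]
  have hEv : (p : ℤ) * (Cfin.card : ℤ) = (Fintype.card (∀ i, ZMod (n i)) : ℤ) := by
    obtain ⟨W, hW⟩ := hD
    have h1 := congrArg (Polynomial.eval (1 : ℤ)) hW
    rw [Polynomial.eval_sub, Polynomial.eval_mul, Polynomial.eval_mul, Polynomial.eval_sub,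
        Polynomial.eval_pow, Polynomial.eval_one, Polynomial.eval_X, one_pow, sub_self,
        zero_mul, hPA1, hPC1, hT1] at h1
    linarith
  clear_value PA PCp T e Cfin N k
  have hΦPC : ∀ j, 1 ≤ j → j ≤ k → Polynomial.cyclotomic (p ^ j) ℤ ∣ PCp := by
    intro j hj1 hjk
    have hirr : Irreducible (Polynomial.cyclotomic (p ^ j) ℤ) :=
      Polynomial.cyclotomic.irreducible (pow_pos hppos j)
    have hprime : Prime (Polynomial.cyclotomic (p ^ j) ℤ) :=
      UniqueFactorizationMonoid.irreducible_iff_prime.mp hirr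
    have hcyc_eq : Polynomial.cyclotomic (p ^ j) ℤ
        = ∑ m ∈ Finset.range p, Polynomial.X ^ (p ^ (j - 1) * m) := by
      rw [show p ^ j = p ^ ((j - 1) + 1) by congr 1; omega,
        Polynomial.cyclotomic_prime_pow_eq_geom_sum hp]
      exact Finset.sum_congr rfl fun i _ => by rw [← pow_mul]
    have hgsj : Polynomial.cyclotomic (p ^ j) ℤ ∣ PCgs (p ^ j) := by
      have h := PCgs_mul (p ^ (j - 1)) p
      rw [show p ^ (j - 1) * p = p ^ j by rw [← pow_succ]; congr 1; omega] at h
      rw [h, ← hcyc_eq]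
      exact dvd_mul_left _ _
    have hgsN : PCgs (p ^ j) ∣ PCgs N := by
      have h := PCgs_mul (p ^ j) (p ^ (k - j))
      rw [show p ^ j * p ^ (k - j) = N by rw [← pow_add, hNdef]; congr 1; omega] at h
      exact ⟨_, h⟩
    have hΦN : Polynomial.cyclotomic (p ^ j) ℤ ∣ PCgs N := hgsj.trans hgsN
    have hPAPC : Polynomial.cyclotomic (p ^ j) ℤ ∣ PA * PCp := by
      have h1 := dvd_add ((hΦN.trans hXN).trans hD) (hΦN.trans hT)
      simpa using h1
    rcases hprime.dvd_mul.mp hPAPC with hcase | hcase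
    · exfalso
      have hXpj : Polynomial.cyclotomic (p ^ j) ℤ
          ∣ (Polynomial.X : Polynomial ℤ) ^ (p ^ j) - 1 :=
        hgsj.trans ⟨_, (PCgs_mul_X_sub_one (p ^ j)).symm⟩
      have hdiff : ((Polynomial.X : Polynomial ℤ) ^ (p ^ j) - 1)
          ∣ PA - ∑ a ∈ insert 0 S, Polynomial.X ^ ((a t).val % p ^ j) := by
        rw [hPAdef, ← Finset.sum_sub_distrib]
        apply Finset.dvd_sum
        intro a _
        have h2 := PC_X_pow_mod_dvd (p ^ j) (e a)
        rwa [show e a % p ^ j = (a t).val % p ^ j by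
          rw [hedef]
          show ((a t).val % N) % p ^ j = (a t).val % p ^ j
          rw [hNdef]
          exact Nat.mod_mod_of_dvd _ (pow_dvd_pow p hjk)] at h2
      have hPAj : Polynomial.cyclotomic (p ^ j) ℤ
          ∣ ∑ a ∈ insert 0 S, Polynomial.X ^ ((a t).val % p ^ j) := by
        have h3 := dvd_sub hcase (hXpj.trans hdiff)
        simpa using h3
      obtain ⟨r0, hr0, hcount⟩ := PC_divisor_analysis hp hj1 (insert 0 S)
        (fun a => (a t).val % p ^ j) (fun a _ => Nat.mod_lt _ (pow_pos hppos j)) hcard hPAj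
      have hr00 : r0 = 0 := by
        have hzmem : (0 : ∀ i, ZMod (n i)) ∈ (insert 0 S).filter
            (fun a => (a t).val % p ^ j = 0) := by
          refine Finset.mem_filter.mpr ⟨Finset.mem_insert_self 0 S, ?_⟩
          simp
        have hpos1 : 0 < ((insert 0 S).filter (fun a => (a t).val % p ^ j = 0)).card :=
          Finset.card_pos.mpr ⟨0, hzmem⟩
        have hc0 := hcount 0 (pow_pos hppos j)
        rw [Nat.zero_mod] at hc0
        by_contra hcon
        rw [if_neg (fun hh => hcon hh.symm)] at hc0
        exact (Int.natCast_ne_zero.mpr hpos1.ne') hc0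
      by_cases hj2 : j = 1
      · subst hj2
        have hE : (s t).val % p ^ 1 < p ^ 1 := Nat.mod_lt _ (pow_pos hppos 1)
        have hcE := hcount ((s t).val % p ^ 1) hE
        have hsmem : s ∈ (insert 0 S).filter
            (fun a => (a t).val % p ^ 1 = (s t).val % p ^ 1) :=
          Finset.mem_filter.mpr ⟨hs, rfl⟩
        have hs'mem : s' ∈ (insert 0 S).filter
            (fun a => (a t).val % p ^ 1 = (s t).val % p ^ 1) := by
          refine Finset.mem_filter.mpr ⟨hs', ?_⟩
          show (s' t).val % p ^ 1 = (s t).val % p ^ 1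
          rw [pow_one]
          exact hmod.symm
        have h2card : 1 < ((insert 0 S).filter
            (fun a => (a t).val % p ^ 1 = (s t).val % p ^ 1)).card :=
          Finset.one_lt_card.mpr ⟨s, hsmem, s', hs'mem, hsne⟩
        have hle : (((insert 0 S).filter
            (fun a => (a t).val % p ^ 1 = (s t).val % p ^ 1)).card : ℤ) ≤ 1 := by
          rw [hcE]; split <;> norm_num
        have hgt : (1 : ℤ) < (((insert 0 S).filter
            (fun a => (a t).val % p ^ 1 = (s t).val % p ^ 1)).card : ℤ) := by
          exact_mod_cast h2card
        exact absurd hle (not_le.mpr hgt)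
      · apply PC_gen_contradiction n t p hp ht S hgen
        intro sx hsx
        have hElt : (sx t).val % p ^ j < p ^ j := Nat.mod_lt _ (pow_pos hppos j)
        have hmem : sx ∈ (insert 0 S).filter
            (fun a => (a t).val % p ^ j = (sx t).val % p ^ j) :=
          Finset.mem_filter.mpr ⟨Finset.mem_insert_of_mem hsx, rfl⟩
        have hposx : 0 < ((insert 0 S).filter
            (fun a => (a t).val % p ^ j = (sx t).val % p ^ j)).card :=
          Finset.card_pos.mpr ⟨sx, hmem⟩
        have hcE := hcount ((sx t).val % p ^ j) hElt
        have hcond : ((sx t).val % p ^ j) % p ^ (j - 1) = r0 := by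
          by_contra hcon
          rw [if_neg hcon] at hcE
          exact (Int.natCast_ne_zero.mpr hposx.ne') hcE
        rw [hr00] at hcond
        have hdvd1 : p ^ (j - 1) ∣ (sx t).val % p ^ j := Nat.dvd_of_mod_eq_zero hcond
        have hdvd2 : p ∣ (sx t).val % p ^ j :=
          dvd_trans (dvd_pow_self p (Nat.sub_ne_zero_of_lt (lt_of_le_of_ne hj1 (Ne.symm hj2)))) hdvd1
        exact (Nat.dvd_mod_iff (dvd_pow_self p (Nat.one_le_iff_ne_zero.mp hj1))).mp hdvd2
    · exact hcase
  have hgsPC : PCgs N ∣ PCp := by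
    rw [hNdef, PC_gs_prod_cyclotomic p hp k]
    apply PC_prod_dvd_of_dvd PCp (fun j => Polynomial.cyclotomic (p ^ (j + 1)) ℤ) k
    · intro j hj
      exact UniqueFactorizationMonoid.irreducible_iff_prime.mp
        (Polynomial.cyclotomic.irreducible (pow_pos hppos (j + 1)))
    · intro i j hi hj hne hdvdij
      have hass := (Polynomial.cyclotomic.irreducible (pow_pos hppos (i + 1))).associated_of_dvd
        (Polynomial.cyclotomic.irreducible (pow_pos hppos (j + 1))) hdvdij
      have heq := Polynomial.eq_of_monic_of_associated
        (Polynomial.cyclotomic.monic _ _) (Polynomial.cyclotomic.monic _ _) hass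
      have h1 := Polynomial.cyclotomic_injective heq
      have h2 := Nat.pow_right_injective hp.two_le h1
      omega
    · intro j hj
      exact hΦPC (j + 1) (by omega) (by omega)
  have hcardpos : 0 < Fintype.card (∀ i, ZMod (n i)) := Fintype.card_pos
  have hCpos : 0 < Cfin.card := by
    rcases Nat.eq_zero_or_pos Cfin.card with h | h
    · exfalso
      rw [h, Nat.cast_zero, mul_zero] at hEv
      exact (Int.natCast_ne_zero.mpr hcardpos.ne') hEv.symm
    · exact h
  have hPCne : PCp ≠ 0 := by
    intro hz
    rw [hz, Polynomial.eval_zero] at hPC1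
    exact (Int.natCast_ne_zero.mpr hCpos.ne') hPC1.symm
  obtain ⟨Qc, hQc⟩ := hgsPC
  have hgsne : PCgs N ≠ 0 := by
    intro hz
    have h1 := PCgs_eval_one N
    rw [hz, Polynomial.eval_zero] at h1
    exact (Int.natCast_ne_zero.mpr hN0.ne') h1.symm
  have hQcne : Qc ≠ 0 := by
    rintro rfl
    rw [mul_zero] at hQc
    exact hPCne hQc
  have hgsdeg : (PCgs N).natDegree = N - 1 := by
    have hmul := PCgs_mul_X_sub_one N
    have hXne : (Polynomial.X - 1 : Polynomial ℤ) ≠ 0 := by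
      intro hz
      have h1 := congrArg (Polynomial.eval (0 : ℤ)) hz
      simp at h1
    have hdeg := Polynomial.natDegree_mul hgsne hXne
    rw [hmul] at hdeg
    have h1 : ((Polynomial.X : Polynomial ℤ) ^ N - 1).natDegree = N := by
      rw [← Polynomial.C_1, Polynomial.natDegree_X_pow_sub_C]
    have h2 : (Polynomial.X - 1 : Polynomial ℤ).natDegree = 1 := by
      rw [← Polynomial.C_1]
      exact Polynomial.natDegree_X_sub_C 1
    omega
  have hdegPC : PCp.natDegree ≤ N - 1 := by
    rw [hPCdef]
    apply PC_natDegree_sum_X_pow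
    intro a _
    have h1 : e a < N := by
      rw [hedef]
      show (a t).val % N < N
      exact Nat.mod_lt _ hN0
    omega
  have hdegQc : Qc.natDegree = 0 := by
    have h1 := Polynomial.natDegree_mul hgsne hQcne
    rw [← hQc] at h1
    omega
  obtain ⟨cq, hcq⟩ := Polynomial.natDegree_eq_zero.mp hdegQc
  have hval : (Cfin.card : ℤ) = N * cq := by
    have h1 := congrArg (Polynomial.eval (1 : ℤ)) hQc
    rw [Polynomial.eval_mul, PCgs_eval_one, ← hcq, Polynomial.eval_C, hPC1] at h1
    exact h1
  have hdvdInt : ((p ^ (k + 1) : ℕ) : ℤ) ∣ (Fintype.card (∀ i, ZMod (n i)) : ℤ) := by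
    refine ⟨cq, ?_⟩
    rw [← hEv, hval, hNdef]
    push_cast
    ring
  have hdvdNat : p ^ (k + 1) ∣ Fintype.card (∀ i, ZMod (n i)) :=
    Int.natCast_dvd_natCast.mp hdvdInt
  have hcardG : Fintype.card (∀ i, ZMod (n i)) = ∏ i, n i := by
    rw [Fintype.card_pi]
    exact Finset.prod_congr rfl fun i _ => ZMod.card (n i)
  rw [hcardG] at hdvdNat
  have hsplitprod : (∏ i, n i) = n t * ∏ i ∈ Finset.univ.erase t, n i :=
    (Finset.mul_prod_erase Finset.univ n (Finset.mem_univ t)).symm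
  rw [hsplitprod] at hdvdNat
  have hcop : (p ^ (k + 1)).Coprime (∏ i ∈ Finset.univ.erase t, n i) := by
    apply Nat.Coprime.pow_left
    apply Nat.Coprime.prod_right
    intro i hi
    exact (hp.coprime_iff_not_dvd).mpr (fun hdd => (Finset.mem_erase.mp hi).1 (huniq i hdd))
  have hfinal : p ^ (k + 1) ∣ n t := hcop.dvd_of_dvd_mul_right hdvdNat
  rw [hkdef] at hfinal
  exact pow_succ_padicValNat_not_dvd hntne hfinal

/-- Theorem 4.4: let `G = ℤ_{n₁} × ⋯ × ℤ_{n_d}` and `S` an inverse-closed generating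
subset of `G ∖ {0}` with `|S₀| = p` prime, where `S₀ = S ∪ {0}`, and suppose exactly
one of `n₁, …, n_d`, say `n_t`, is divisible by `p`. Then `Cay(G, S)` admits a
perfect code iff `s_t ≢ s'_t (mod p)` for all distinct `s, s' ∈ S₀`. -/
theorem perfectCode_iff_mod_p (d : ℕ) (hd : 1 ≤ d) (n : Fin d → ℕ)
    (hn : ∀ i, 2 ≤ n i) [∀ i, NeZero (n i)]
    (S : Finset (∀ i, ZMod (n i))) (h0 : (0 : ∀ i, ZMod (n i)) ∉ S)
    (hinv : ∀ s ∈ S, -s ∈ S)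
    (hgen : AddSubgroup.closure (S : Set (∀ i, ZMod (n i))) = ⊤)
    (p : ℕ) (hp : p.Prime) (hcard : (insert 0 S).card = p)
    (t : Fin d) (ht : p ∣ n t) (huniq : ∀ i, p ∣ n i → i = t) :
    (∃ C : Set (∀ i, ZMod (n i)),
        IsPerfectCode (cayley (S : Set (∀ i, ZMod (n i)))) C) ↔
      ∀ s ∈ insert 0 S, ∀ s' ∈ insert 0 S, s ≠ s' →
        ¬ ((s t).val ≡ (s' t).val [MOD p]) := by
  classical
  haveI : Fact p.Prime := ⟨hp⟩
  haveI : NeZero p := ⟨hp.ne_zero⟩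
  let φ := PCphi n t p ht
  let A := insert (0 : ∀ i, ZMod (n i)) S
  constructor
  · rintro ⟨C, hC⟩ s hs s' hs' hsne hmod
    exact main_forward d n hn S h0 hinv hgen p hp hcard t ht huniq C hC s hs s' hs' hsne hmod
  · intro hdist
    have hinj : ∀ a ∈ A, ∀ a' ∈ A, φ a = φ a' → a = a' := by
      intro a ha a' ha' heq
      by_contra hne
      exact hdist a ha a' ha' hne ((PCphi_eq_iff n t p ht a a').mp heq)
    have hsurj : ∀ ρ : ZMod p, ∃ s ∈ A, φ s = ρ := by
      have himg : A.image φ = Finset.univ := by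
        rw [← Finset.card_eq_iff_eq_univ]
        rw [Finset.card_image_of_injOn (fun a ha a' ha' => hinj a ha a' ha')]
        rw [hcard, ZMod.card]
      intro ρ
      have : ρ ∈ A.image φ := by rw [himg]; exact Finset.mem_univ _
      obtain ⟨s, hsA, hsφ⟩ := Finset.mem_image.mp this
      exact ⟨s, hsA, hsφ⟩
    refine ⟨{g : (∀ i, ZMod (n i)) | φ g = 0}, ?_, ?_⟩
    · intro x hx y hy hadj
      rw [PC_cayley_adj] at hadj
      obtain ⟨hne, hor⟩ := hadj
      rw [Set.mem_setOf_eq] at hx hy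
      rcases hor with h | h
      · have h1 : φ (y - x) = φ 0 := by rw [map_sub, hx, hy, sub_zero, map_zero]
        have h2 := hinj (y - x) (Finset.mem_insert_of_mem h) 0 (Finset.mem_insert_self _ _) h1
        exact hne (sub_eq_zero.mp h2).symm
      · have h1 : φ (x - y) = φ 0 := by rw [map_sub, hx, hy, sub_zero, map_zero]
        have h2 := hinj (x - y) (Finset.mem_insert_of_mem h) 0 (Finset.mem_insert_self _ _) h1
        exact hne (sub_eq_zero.mp h2)
    · intro v hv
      rw [Set.mem_setOf_eq] at hv
      obtain ⟨s, hsA, hsφ⟩ := hsurj (φ v)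
      have hs0 : s ≠ 0 := by
        rintro rfl
        rw [map_zero] at hsφ
        exact hv hsφ.symm
      have hsS : s ∈ S := (Finset.mem_insert.mp hsA).resolve_left hs0
      have hmemC : v - s ∈ {g : (∀ i, ZMod (n i)) | φ g = 0} := by
        rw [Set.mem_setOf_eq, map_sub, hsφ, sub_self]
      have hadjC : (cayley (S : Set (∀ i, ZMod (n i)))).Adj v (v - s) := by
        rw [PC_cayley_adj]
        refine ⟨?_, Or.inr ?_⟩
        · intro h
          apply hs0
          have := sub_eq_self.mp h.symm
          exact this
        · rw [sub_sub_cancel]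
          exact hsS
      refine ⟨v - s, ⟨hmemC, hadjC⟩, ?_⟩
      rintro c' ⟨hc'C, hadj'⟩
      rw [PC_cayley_adj] at hadj'
      obtain ⟨hne', hor'⟩ := hadj'
      rw [Set.mem_setOf_eq] at hc'C
      have hvc' : v - c' ∈ S := by
        rcases hor' with h | h
        · have := hinv _ h
          rwa [neg_sub] at this
        · exact h
      have h1 : φ (v - c') = φ s := by rw [map_sub, hc'C, sub_zero, hsφ]
      have h2 := hinj (v - c') (Finset.mem_insert_of_mem hvc') s hsA h1
      rw [← h2, sub_sub_cancel]
end

section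
/- Let G = ℤ_{n₁} × ⋯ × ℤ_{n_d} with all n_i ≥ 2 and let S be an inverse-closed subset of G∖{(0,…,0)} with ⟨S⟩ = G. Suppose that |S| can be factorized as |S| = m₁m₂⋯m_d, where each m_i ≥ 1 is a divisor of n_i, such that for each pair of distinct elements (s₁,…,s_d), (s₁′,…,s_d′) of S there exists at least one j ∈ {1,…,d} with s_j ≢ s_j′ (mod m_j). Then Cay(G, S) admits a total perfect code. -/
/-- Lemma 4.8: let `G = ℤ_{n₁} × ⋯ × ℤ_{n_d}` and `S` an inverse-closed generating
subset of `G ∖ {0}`. If `|S| = m₁⋯m_d` with each `m_i` a divisor of `n_i`, and for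
each pair of distinct elements of `S` some coordinate `j` satisfies
`s_j ≢ s'_j (mod m_j)`, then `Cay(G, S)` admits a total perfect code. -/
theorem totalPerfectCode_of_separation (d : ℕ) (hd : 1 ≤ d) (n : Fin d → ℕ)
    (hn : ∀ i, 2 ≤ n i) [∀ i, NeZero (n i)]
    (S : Finset (∀ i, ZMod (n i))) (h0 : (0 : ∀ i, ZMod (n i)) ∉ S)
    (hinv : ∀ s ∈ S, -s ∈ S)
    (hgen : AddSubgroup.closure (S : Set (∀ i, ZMod (n i))) = ⊤)
    (m : Fin d → ℕ) (hm1 : ∀ i, 1 ≤ m i) (hmd : ∀ i, m i ∣ n i)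
    (hcard : S.card = ∏ i, m i)
    (hsep : ∀ s ∈ S, ∀ s' ∈ S, s ≠ s' →
      ∃ j, ¬ ((s j).val ≡ (s' j).val [MOD m j])) :
    ∃ C : Set (∀ i, ZMod (n i)),
      IsTotalPerfectCode (cayley (S : Set (∀ i, ZMod (n i)))) C := by

  haveI : ∀ i, NeZero (m i) := fun i => ⟨Nat.one_le_iff_ne_zero.mp (hm1 i)⟩
  set f : (∀ i, ZMod (n i)) →+ (∀ i, ZMod (m i)) :=
    AddMonoidHom.mk' (fun x i => ZMod.castHom (hmd i) (ZMod (m i)) (x i))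
      (by intro a b; funext i; exact map_add (ZMod.castHom (hmd i) (ZMod (m i))) (a i) (b i)) with hf
  have hinj : Set.InjOn f (S : Set (∀ i, ZMod (n i))) := by
    intro s hs s' hs' h
    by_contra hne
    obtain ⟨j, hj⟩ := hsep s hs s' hs' hne
    apply hj
    have hj2 := congrFun h j
    simp only [hf, AddMonoidHom.mk'_apply, ZMod.castHom_apply] at hj2
    rw [← ZMod.natCast_eq_natCast_iff]
    rw [← ZMod.natCast_val, ← ZMod.natCast_val] at hj2
    exact hj2
  have hsurj : ∀ t : (∀ i, ZMod (m i)), ∃ s ∈ S, f s = t := by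
    have himg : S.image f = Finset.univ := by
      apply Finset.eq_univ_of_card
      rw [Finset.card_image_of_injOn hinj, hcard]
      simp [Fintype.card_pi, ZMod.card]
    intro t
    have : t ∈ S.image f := by rw [himg]; exact Finset.mem_univ t
    obtain ⟨s, hs, hst⟩ := Finset.mem_image.mp this
    exact ⟨s, hs, hst⟩
  refine ⟨{x | f x = 0}, fun v => ?_⟩
  obtain ⟨s, hs, hfs⟩ := hsurj (-(f v))
  have hs0 : s ≠ 0 := fun h => h0 (h ▸ hs)
  refine ⟨v + s, ⟨by simp [Set.mem_setOf_eq, hfs], ?_⟩, ?_⟩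
  · rw [cayley, SimpleGraph.fromRel_adj]
    constructor
    · intro h
      exact hs0 (by linear_combination (norm := abel) h.symm)
    · left; simpa using hs
  · rintro c ⟨hc, hadj⟩
    rw [cayley, SimpleGraph.fromRel_adj] at hadj
    obtain ⟨hne, hmem⟩ := hadj
    have hcv : c - v ∈ S := by
      rcases hmem with h | h
      · exact h
      · have := hinv _ h
        simpa using this
    have : f (c - v) = f s := by
      rw [map_sub]
      rw [Set.mem_setOf_eq] at hc
      rw [hc, hfs]
      abel
    have := hinj hcv hs this
    linear_combination (norm := abel) this
end

section
/- Let G = ℤ_{n₁} × ⋯ × ℤ_{n_d} with all n_i ≥ 2 and let S be an inverse-closed subset of G∖{(0,…,0)} with ⟨S⟩ = G. Suppose that |S| = p is an odd prime and exactly one of n₁,…,n_d, say n_t, is divisible by p. Then Cay(G, S) admits a total perfect code if and only if s_t ≢ s_t′ (mod p) for each pair of distinct elements (s₁,…,s_d), (s₁′,…,s_d′) of S. -/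
open Polynomial in
lemma key_vanish (p k : ℕ) (hp : p.Prime) (hk : 1 ≤ k) {ζ : ℂ}
    (hζ : IsPrimitiveRoot ζ (p ^ k)) (m : Multiset (ZMod (p ^ k)))
    (hcard : Multiset.card m = p)
    (hsum : (m.map (fun e => ζ ^ e.val)).sum = 0)
    (h0 : (0 : ZMod (p ^ k)) ∈ m) :
    m.Nodup ∧ ∀ e ∈ m, p ^ (k - 1) ∣ e.val := by
  haveI : NeZero (p ^ k) := ⟨pow_ne_zero _ hp.pos.ne'⟩
  have hq : 0 < p ^ (k - 1) := pow_pos hp.pos _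
  have hpk : p ^ (k - 1) * p = p ^ k := by
    rw [← pow_succ]; congr 1; omega
  set f : ℤ[X] := (m.map (fun e => (X : ℤ[X]) ^ e.val)).sum with hf
  have hfc : ∀ nn, f.coeff nn = ((m.map ZMod.val).count nn : ℤ) := by
    rw [hf]; clear_value f; clear hf hsum h0 hcard
    induction m using Multiset.induction_on with
    | empty => simp
    | cons a s ih =>
      intro nn
      simp only [Multiset.map_cons, Multiset.sum_cons, Polynomial.coeff_add, ih,
        Multiset.count_cons, coeff_X_pow, Nat.cast_add]
      rw [add_comm]
      congr 1
      split <;> simp_all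
  have hf1 : f.eval 1 = (p : ℤ) := by
    have h := map_multiset_sum (Polynomial.evalRingHom (1 : ℤ)) (m.map (fun e => (X : ℤ[X]) ^ e.val))
    simp only [Multiset.map_map, Function.comp, coe_evalRingHom, eval_pow, eval_X, one_pow] at h
    rw [hf, h]
    simp [Multiset.map_const', hcard]
  have hfne : f ≠ 0 := by
    intro h
    rw [h] at hf1
    simp at hf1
    exact hp.ne_zero (by exact_mod_cast hf1.symm)
  have hfdeg : f.natDegree < p ^ k := by
    by_contra h
    push_neg at h
    have hcz : f.coeff f.natDegree = 0 := by
      rw [hfc]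
      norm_cast
      rw [Multiset.count_eq_zero]
      intro hmem
      obtain ⟨e, _, he⟩ := Multiset.mem_map.mp hmem
      exact absurd (he ▸ ZMod.val_lt e) (not_lt.mpr h)
    exact Polynomial.leadingCoeff_ne_zero.mpr hfne hcz
  have hzero : Polynomial.aeval ζ f = 0 := by
    have h := map_multiset_sum (Polynomial.aeval ζ) (m.map (fun e => (X : ℤ[X]) ^ e.val))
    rw [hf, h]
    rw [Multiset.map_map]
    simpa using hsum
  have hdvd : cyclotomic (p ^ k) ℤ ∣ f := by
    have hpos : 0 < p ^ k := pow_pos hp.pos k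
    have hmin := cyclotomic_eq_minpoly_rat hζ hpos
    have h1 : minpoly ℚ ζ ∣ f.map (algebraMap ℤ ℚ) := by
      apply minpoly.dvd
      rw [Polynomial.aeval_map_algebraMap]
      exact hzero
    rw [← hmin, ← Polynomial.map_cyclotomic (p ^ k) (algebraMap ℤ ℚ)] at h1
    exact (Polynomial.map_dvd_map (algebraMap ℤ ℚ) (fun a b h => by exact_mod_cast h)
      (cyclotomic.monic _ ℤ)).mp h1
  obtain ⟨g, hfg⟩ := hdvd
  have hΦ0 : cyclotomic (p ^ k) ℤ ≠ 0 := cyclotomic_ne_zero _ ℤ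
  have hg0 : g ≠ 0 := by
    rintro rfl
    rw [mul_zero] at hfg
    exact hfne hfg
  have hdegΦ : (cyclotomic (p ^ k) ℤ).natDegree = p ^ (k - 1) * (p - 1) := by
    rw [natDegree_cyclotomic, Nat.totient_prime_pow hp hk]
  have hdegg : g.natDegree < p ^ (k - 1) := by
    have hmul := Polynomial.natDegree_mul hΦ0 hg0
    rw [hfg, hmul, hdegΦ] at hfdeg
    have h1 : p ^ (k - 1) * (p - 1) + p ^ (k - 1) * 1 = p ^ (k - 1) * p := by
      rw [← Nat.mul_add]
      congr 1
      have := hp.pos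
      omega
    omega
  have hΦgeom : cyclotomic (p ^ k) ℤ = ∑ i ∈ Finset.range p, ((X : ℤ[X]) ^ p ^ (k - 1)) ^ i := by
    have h : p ^ k = p ^ ((k - 1) + 1) := by congr 1; omega
    rw [h, cyclotomic_prime_pow_eq_geom_sum hp]
  have hcf : ∀ j < p, ∀ r < p ^ (k - 1), f.coeff (j * p ^ (k - 1) + r) = g.coeff r := by
    intro j hj r hr
    rw [hfg, hΦgeom, Finset.sum_mul, finset_sum_coeff]
    have hterm : ∀ i ∈ Finset.range p,
        ((((X : ℤ[X]) ^ p ^ (k - 1)) ^ i) * g).coeff (j * p ^ (k - 1) + r) =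
          if i = j then g.coeff r else 0 := by
      intro i _
      rw [← pow_mul, X_pow_mul, coeff_mul_X_pow']
      have hcomm : j * p ^ (k - 1) = p ^ (k - 1) * j := mul_comm _ _
      rcases lt_trichotomy i j with hij | rfl | hij
      · have hmul : p ^ (k - 1) * (i + 1) ≤ p ^ (k - 1) * j := Nat.mul_le_mul_left _ (by omega)
        have hexp : p ^ (k - 1) * (i + 1) = p ^ (k - 1) * i + p ^ (k - 1) := by ring
        rw [if_pos (show p ^ (k - 1) * i ≤ j * p ^ (k - 1) + r by omega),
          if_neg (show ¬ i = j by omega)]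
        exact Polynomial.coeff_eq_zero_of_natDegree_lt (by omega)
      · rw [if_pos (show p ^ (k - 1) * i ≤ i * p ^ (k - 1) + r by omega), if_pos rfl]
        congr 1
        omega
      · have hmul : p ^ (k - 1) * (j + 1) ≤ p ^ (k - 1) * i := Nat.mul_le_mul_left _ (by omega)
        have hexp : p ^ (k - 1) * (j + 1) = p ^ (k - 1) * j + p ^ (k - 1) := by ring
        rw [if_neg (show ¬ p ^ (k - 1) * i ≤ j * p ^ (k - 1) + r by omega),
          if_neg (show ¬ i = j by omega)]
    rw [Finset.sum_congr rfl hterm, Finset.sum_ite_eq' (Finset.range p) j (fun _ => g.coeff r)]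
    rw [if_pos (Finset.mem_range.mpr hj)]
  have hgnn : ∀ r, 0 ≤ g.coeff r := by
    intro r
    rcases lt_or_ge r (p ^ (k - 1)) with h | h
    · rw [← hcf 0 hp.pos r h]
      simp only [zero_mul, zero_add]
      rw [hfc]
      positivity
    · rw [Polynomial.coeff_eq_zero_of_natDegree_lt (lt_of_lt_of_le hdegg h)]
  have hg1 : g.eval 1 = 1 := by
    have h : f.eval 1 = (cyclotomic (p ^ k) ℤ).eval 1 * g.eval 1 := by
      rw [hfg, Polynomial.eval_mul]
    have hΦ1 : (cyclotomic (p ^ k) ℤ).eval 1 = (p : ℤ) := by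
      rw [hΦgeom]
      simp [Polynomial.eval_finset_sum]
    rw [hf1, hΦ1] at h
    have hpne : (p : ℤ) ≠ 0 := by exact_mod_cast hp.ne_zero
    exact (mul_left_cancel₀ hpne (by rw [mul_one]; exact h)).symm
  have hsum_coeff : ∑ r ∈ Finset.range (p ^ (k - 1)), g.coeff r = 1 := by
    have h := Polynomial.eval_eq_sum_range' hdegg (1 : ℤ)
    simp only [one_pow, mul_one] at h
    rw [← h, hg1]
  have hex : ∃ w ∈ Finset.range (p ^ (k - 1)), g.coeff w ≠ 0 := by
    by_contra h
    push_neg at h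
    rw [Finset.sum_eq_zero h] at hsum_coeff
    exact one_ne_zero hsum_coeff.symm
  obtain ⟨w, hwmem, hw0⟩ := hex
  have herase : g.coeff w + ∑ r ∈ (Finset.range (p ^ (k - 1))).erase w, g.coeff r = 1 := by
    rw [Finset.add_sum_erase _ _ hwmem]
    exact hsum_coeff
  have herase_nonneg : 0 ≤ ∑ r ∈ (Finset.range (p ^ (k - 1))).erase w, g.coeff r :=
    Finset.sum_nonneg fun r _ => hgnn r
  have hw1 : g.coeff w = 1 := by
    have := hgnn w
    have herase_zero : ∑ r ∈ (Finset.range (p ^ (k - 1))).erase w, g.coeff r ≤ 0 := by omega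
    omega
  have hother : ∀ r, r ≠ w → g.coeff r = 0 := by
    intro r hrw
    rcases lt_or_ge r (p ^ (k - 1)) with h | h
    · have hzero : ∑ x ∈ (Finset.range (p ^ (k - 1))).erase w, g.coeff x = 0 := by omega
      have := (Finset.sum_eq_zero_iff_of_nonneg fun x _ => hgnn x).mp hzero r
        (Finset.mem_erase.mpr ⟨hrw, Finset.mem_range.mpr h⟩)
      exact this
    · exact Polynomial.coeff_eq_zero_of_natDegree_lt (lt_of_lt_of_le hdegg h)
  have hfind : ∀ nn < p ^ k, f.coeff nn = if nn % p ^ (k - 1) = w then 1 else 0 := by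
    intro nn hnn
    have hj : nn / p ^ (k - 1) < p := by
      rw [Nat.div_lt_iff_lt_mul hq]
      have hpk2 : p * p ^ (k - 1) = p ^ k := by rw [mul_comm]; exact hpk
      omega
    have hform := hcf (nn / p ^ (k - 1)) hj (nn % p ^ (k - 1)) (Nat.mod_lt _ hq)
    rw [Nat.div_add_mod' nn (p ^ (k - 1))] at hform
    split
    · next hcase => rw [hform, hcase, hw1]
    · next hcase => rw [hform]; exact hother _ hcase
  have hcount : ∀ b : ZMod (p ^ k),
      (Multiset.count b m : ℤ) = if b.val % p ^ (k - 1) = w then 1 else 0 := by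
    intro b
    have h1 : Multiset.count b m = (m.map ZMod.val).count b.val := by
      rw [Multiset.count_map_eq_count' _ _ (ZMod.val_injective _)]
    rw [h1, ← hfc, hfind b.val (ZMod.val_lt b)]
  have hwzero : w = 0 := by
    have h1 : (1 : ℤ) ≤ (Multiset.count (0 : ZMod (p ^ k)) m : ℤ) := by
      exact_mod_cast Multiset.one_le_count_iff_mem.mpr h0
    rw [hcount 0] at h1
    simp only [ZMod.val_zero, Nat.zero_mod] at h1
    by_contra hne
    rw [if_neg (fun hw => hne hw.symm)] at h1
    omega
  constructor
  · rw [Multiset.nodup_iff_count_le_one]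
    intro b
    have := hcount b
    split at this <;> omega
  · intro e he
    have h1 : (1 : ℤ) ≤ (Multiset.count e m : ℤ) := by
      exact_mod_cast Multiset.one_le_count_iff_mem.mpr he
    rw [hcount e] at h1
    split at h1
    · next hcase => rw [hwzero] at hcase; exact Nat.dvd_of_mod_eq_zero hcase
    · omega

/-- Theorem 4.9: let `G = ℤ_{n₁} × ⋯ × ℤ_{n_d}` and `S` an inverse-closed generating
subset of `G ∖ {0}` with `|S| = p` an odd prime, and suppose exactly one of
`n₁, …, n_d`, say `n_t`, is divisible by `p`. Then `Cay(G, S)` admits a total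
perfect code iff `s_t ≢ s'_t (mod p)` for all distinct `s, s' ∈ S`. -/
theorem totalPerfectCode_iff_mod_p (d : ℕ) (hd : 1 ≤ d) (n : Fin d → ℕ)
    (hn : ∀ i, 2 ≤ n i) [∀ i, NeZero (n i)]
    (S : Finset (∀ i, ZMod (n i))) (h0 : (0 : ∀ i, ZMod (n i)) ∉ S)
    (hinv : ∀ s ∈ S, -s ∈ S)
    (hgen : AddSubgroup.closure (S : Set (∀ i, ZMod (n i))) = ⊤)
    (p : ℕ) (hp : p.Prime) (hodd : Odd p) (hcard : S.card = p)
    (t : Fin d) (ht : p ∣ n t) (huniq : ∀ i, p ∣ n i → i = t) :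
    (∃ C : Set (∀ i, ZMod (n i)),
        IsTotalPerfectCode (cayley (S : Set (∀ i, ZMod (n i)))) C) ↔
      ∀ s ∈ S, ∀ s' ∈ S, s ≠ s' → ¬ ((s t).val ≡ (s' t).val [MOD p]) := by
  classical
  haveI : NeZero p := ⟨hp.ne_zero⟩
  have hAdj : ∀ v c : (∀ i, ZMod (n i)),
      (cayley (S : Set (∀ i, ZMod (n i)))).Adj v c ↔ (c - v) ∈ S := by
    intro v c
    rw [cayley, SimpleGraph.fromRel_adj]
    constructor
    · rintro ⟨hne, h | h⟩
      · exact h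
      · have := hinv _ h
        simpa using this
    · intro h
      refine ⟨?_, Or.inl h⟩
      rintro rfl
      rw [sub_self] at h
      exact h0 h
  -- the projection homomorphism to ZMod p
  set φ : (∀ i, ZMod (n i)) →+ ZMod p :=
    ((ZMod.castHom ht (ZMod p)).toAddMonoidHom.comp
      (Pi.evalAddMonoidHom (fun i => ZMod (n i)) t)) with hφdef
  have hφval : ∀ x : (∀ i, ZMod (n i)), φ x = (((x t).val : ℕ) : ZMod p) := by
    intro x
    show (ZMod.castHom ht (ZMod p)) (x t) = _
    rw [ZMod.castHom_apply, ZMod.natCast_val]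
  have hφmod : ∀ x y : (∀ i, ZMod (n i)),
      (φ x = φ y) ↔ ((x t).val ≡ (y t).val [MOD p]) := by
    intro x y
    rw [hφval, hφval, ZMod.natCast_eq_natCast_iff]
  constructor
  · -- hard direction
    rintro ⟨C, hC⟩ s hs s' hs' hne hmod
    set k := (n t).factorization p with hkdef
    have hk1 : 1 ≤ k := hp.factorization_pos_of_dvd (NeZero.ne _) ht
    set K := p ^ k with hKdef
    haveI : NeZero K := ⟨pow_ne_zero _ hp.pos.ne'⟩
    have hKdvd : K ∣ n t := Nat.ordProj_dvd _ _
    have hpK : p ∣ K := by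
      rw [hKdef]
      exact dvd_pow_self p (by omega)
    set q : (∀ i, ZMod (n i)) →+ ZMod K :=
      ((ZMod.castHom hKdvd (ZMod K)).toAddMonoidHom.comp
        (Pi.evalAddMonoidHom (fun i => ZMod (n i)) t)) with hqdef
    have hqnat : ∀ x : (∀ i, ZMod (n i)), q x = (((x t).val : ℕ) : ZMod K) := by
      intro x
      show (ZMod.castHom hKdvd (ZMod K)) (x t) = _
      rw [ZMod.castHom_apply, ZMod.natCast_val]
    have hqval : ∀ x : (∀ i, ZMod (n i)), (q x).val = (x t).val % K := by
      intro x
      rw [hqnat, ZMod.val_natCast]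
    -- unique representation
    have hrep : ∀ g : (∀ i, ZMod (n i)), ∃! w, w ∈ S ∧ g + w ∈ C := by
      intro g
      obtain ⟨c, ⟨hcC, hcadj⟩, huniqc⟩ := hC g
      rw [hAdj] at hcadj
      refine ⟨c - g, ⟨hcadj, by simpa using hcC⟩, ?_⟩
      rintro w ⟨hwS, hwC⟩
      have h1 : g + w = c :=
        huniqc (g + w) ⟨hwC, (hAdj _ _).mpr (by simpa using hwS)⟩
      rw [← h1]
      abel
    -- surjectivity of q
    have hqsurj : ∀ z : ZMod K, ∃ x, q x = z := by
      intro z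
      refine ⟨fun i => ((z.val : ℕ) : ZMod (n i)), ?_⟩
      rw [hqnat]
      have h1 : ((z.val : ℕ) : ZMod (n t)).val = z.val := by
        apply ZMod.val_natCast_of_lt
        calc z.val < K := ZMod.val_lt z
          _ ≤ n t := Nat.le_of_dvd (by have := hn t; omega) hKdvd
      rw [h1, ZMod.natCast_zmod_val]
    -- fibers of q all have the same size
    set N := (Finset.univ.filter (fun x : (∀ i, ZMod (n i)) => q x = 0)).card with hNdef
    have hfib : ∀ z : ZMod K,
        (Finset.univ.filter (fun x : (∀ i, ZMod (n i)) => q x = z)).card = N := by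
      intro z
      obtain ⟨x₀, hx₀⟩ := hqsurj z
      rw [hNdef]
      apply Finset.card_bij' (i := fun x _ => x - x₀) (j := fun y _ => y + x₀)
      · intro a ha
        simp only [Finset.mem_filter, Finset.mem_univ, true_and] at ha ⊢
        rw [map_sub, ha, hx₀, sub_self]
      · intro a ha
        simp only [Finset.mem_filter, Finset.mem_univ, true_and] at ha ⊢
        rw [map_add, ha, hx₀, zero_add]
      · intro a _; abel
      · intro a _; abel
    have hcardG : Fintype.card (∀ i, ZMod (n i)) = K * N := by
      rw [← Finset.card_univ,
        Finset.card_eq_sum_card_fiberwise (f := q) (t := Finset.univ)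
          (fun x _ => Finset.mem_univ _)]
      rw [Finset.sum_congr rfl (fun z _ => hfib z), Finset.sum_const, Finset.card_univ,
        ZMod.card, smul_eq_mul]
    -- the counting function
    set cC : ZMod K → ℕ :=
      fun z => (Finset.univ.filter (fun x : (∀ i, ZMod (n i)) => x ∈ C ∧ q x = z)).card
      with hcCdef
    -- the convolution identity
    have hconv : ∀ z : ZMod K, ∑ w ∈ S, cC (z + q w) = N := by
      intro z
      rw [← hfib z]
      have h1 : ∀ g ∈ Finset.univ.filter (fun x : (∀ i, ZMod (n i)) => q x = z),
          (S.filter (fun w => g + w ∈ C)).card = 1 := by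
        intro g _
        obtain ⟨w₁, hw₁, huniq1⟩ := hrep g
        rw [Finset.card_eq_one]
        refine ⟨w₁, Finset.eq_singleton_iff_unique_mem.mpr ⟨?_, ?_⟩⟩
        · exact Finset.mem_filter.mpr ⟨hw₁.1, hw₁.2⟩
        · intro x hx
          have hx' := Finset.mem_filter.mp hx
          exact huniq1 x ⟨hx'.1, hx'.2⟩
      symm
      calc (Finset.univ.filter (fun x : (∀ i, ZMod (n i)) => q x = z)).card
          = ∑ g ∈ Finset.univ.filter (fun x : (∀ i, ZMod (n i)) => q x = z),
              (S.filter (fun w => g + w ∈ C)).card := by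
            rw [Finset.sum_congr rfl h1, Finset.sum_const, smul_eq_mul, mul_one]
        _ = ∑ g ∈ Finset.univ.filter (fun x : (∀ i, ZMod (n i)) => q x = z),
              ∑ w ∈ S, (if g + w ∈ C then 1 else 0) := by
            refine Finset.sum_congr rfl (fun g _ => ?_)
            rw [Finset.card_filter]
        _ = ∑ w ∈ S, ∑ g ∈ Finset.univ.filter (fun x : (∀ i, ZMod (n i)) => q x = z),
              (if g + w ∈ C then 1 else 0) := Finset.sum_comm
        _ = ∑ w ∈ S, cC (z + q w) := by
            refine Finset.sum_congr rfl (fun w _ => ?_)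
            rw [← Finset.card_filter, Finset.filter_filter]
            simp only [hcCdef]
            apply Finset.card_bij' (i := fun g _ => g + w) (j := fun y _ => y - w)
            · intro a ha
              simp only [Finset.mem_filter, Finset.mem_univ, true_and] at ha ⊢
              exact ⟨ha.2, by rw [map_add, ha.1]⟩
            · intro a ha
              simp only [Finset.mem_filter, Finset.mem_univ, true_and] at ha ⊢
              refine ⟨?_, by simpa using ha.1⟩
              rw [map_sub, ha.2]
              abel
            · intro a _; abel
            · intro a _; abel
    -- there is an element of S with q s₀ = 0
    have hinvol : ∃ s₀ ∈ S, q s₀ = 0 := by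
      have hfix : ∃ s₀ ∈ S, -s₀ = s₀ := by
        by_contra hno
        push_neg at hno
        have hsum2 : ∑ _x ∈ S, (1 : ZMod 2) = 0 := by
          apply Finset.sum_involution (g := fun w _ => -w)
          · intro a _
            decide
          · intro a ha h1
            exact hno a ha
          · intro a _
            simp
          · intro a ha
            exact hinv a ha
        rw [Finset.sum_const, hcard] at hsum2
        have h2 : (2 : ℕ) ∣ p := by
          have h3 : ((p : ℕ) : ZMod 2) = 0 := by rwa [nsmul_eq_mul, mul_one] at hsum2
          exact (ZMod.natCast_eq_zero_iff p 2).mp h3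
        rw [Nat.odd_iff] at hodd
        omega
      obtain ⟨s₀, hs₀S, hs₀⟩ := hfix
      refine ⟨s₀, hs₀S, ?_⟩
      have h1 : q s₀ + q s₀ = 0 := by
        calc q s₀ + q s₀ = q s₀ + q (-s₀) := by rw [hs₀]
          _ = q s₀ + (- q s₀) := by rw [map_neg]
          _ = 0 := by ring
      have hKodd : Odd K := by
        rw [hKdef]
        exact hodd.pow
      obtain ⟨c, hc⟩ := hKodd
      have e1 : ((2 * (c + 1) : ℕ) : ZMod K) = 1 := by
        have h2 : 2 * (c + 1) = K + 1 := by omega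
        rw [h2]
        push_cast [ZMod.natCast_self]
        ring
      calc q s₀ = 1 * q s₀ := (one_mul _).symm
        _ = ((2 * (c + 1) : ℕ) : ZMod K) * q s₀ := by rw [e1]
        _ = ((c + 1 : ℕ) : ZMod K) * (q s₀ + q s₀) := by push_cast; ring
        _ = 0 := by rw [h1, mul_zero]
    -- roots of unity
    obtain ⟨ζ, hζ⟩ : ∃ ζ : ℂ, IsPrimitiveRoot ζ K :=
      ⟨_, Complex.isPrimitiveRoot_exp K (NeZero.ne K)⟩
    set e : ZMod K → ℂ := fun z => ζ ^ z.val with hedef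
    have hζK : ζ ^ (K : ℕ) = 1 := hζ.pow_eq_one
    have hepow : ∀ a : ℕ, ζ ^ (a % K) = ζ ^ a := by
      intro a
      conv_rhs => rw [← Nat.div_add_mod a K]
      rw [pow_add, pow_mul, hζK, one_pow, one_mul]
    have headd : ∀ a b : ZMod K, e (a + b) = e a * e b := by
      intro a b
      show ζ ^ (a + b).val = ζ ^ a.val * ζ ^ b.val
      rw [ZMod.val_add, hepow, pow_add]
    have he0 : e 0 = 1 := by
      show ζ ^ (0 : ZMod K).val = 1
      rw [ZMod.val_zero, pow_zero]
    have horto : ∀ w : ZMod K, ∑ u : ZMod K, e (u * w) = if w = 0 then (K : ℂ) else 0 := by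
      intro w
      split
      · next hw =>
        rw [Finset.sum_congr rfl (fun u _ => by rw [hw, mul_zero, he0])]
        rw [Finset.sum_const, Finset.card_univ, ZMod.card, nsmul_eq_mul, mul_one]
      · next hw =>
        have hterm : ∀ u : ZMod K, e (u * w) = (ζ ^ w.val) ^ u.val := by
          intro u
          show ζ ^ (u * w).val = _
          rw [ZMod.val_mul, hepow, ← pow_mul, mul_comm u.val w.val, pow_mul]
        rw [Finset.sum_congr rfl (fun u _ => hterm u)]
        have hbij : ∑ u : ZMod K, (ζ ^ w.val) ^ u.val = ∑ jj ∈ Finset.range K, (ζ ^ w.val) ^ jj := by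
          apply Finset.sum_bij' (i := fun (u : ZMod K) _ => u.val)
            (j := fun jj _ => ((jj : ℕ) : ZMod K))
          · intro a _
            exact Finset.mem_range.mpr (ZMod.val_lt a)
          · intro a _
            exact Finset.mem_univ _
          · intro a _
            exact ZMod.natCast_zmod_val a
          · intro a ha
            exact ZMod.val_natCast_of_lt (Finset.mem_range.mp ha)
          · intro a _
            rfl
        rw [hbij]
        have hx1 : ζ ^ w.val ≠ 1 := by
          intro h1
          have h2 : (K : ℕ) ∣ w.val := (IsPrimitiveRoot.pow_eq_one_iff_dvd hζ w.val).mp h1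
          have h3 := ZMod.val_lt w
          have hv0 : w.val ≠ 0 := fun h => hw ((ZMod.val_eq_zero w).mp h)
          have := Nat.le_of_dvd (Nat.pos_of_ne_zero hv0) h2
          omega
        rw [geom_sum_eq hx1 K]
        have hxK : (ζ ^ w.val) ^ K = 1 := by
          rw [← pow_mul, mul_comm, pow_mul, hζK, one_pow]
        rw [hxK]
        simp
    set Su : ZMod K → ℂ := fun u => ∑ w ∈ S, e (u * q w) with hSudef
    set cHat : ZMod K → ℂ := fun u => ∑ z : ZMod K, (cC z : ℂ) * e (u * z) with hcHatdef
    have hkey2 : ∀ u : ZMod K, Su (-u) * cHat u = (N : ℂ) * ∑ z : ZMod K, e (u * z) := by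
      intro u
      calc Su (-u) * cHat u
          = ∑ w ∈ S, e ((-u) * q w) * cHat u := by
            show (∑ w ∈ S, e ((-u) * q w)) * cHat u = _
            rw [Finset.sum_mul]
        _ = ∑ w ∈ S, ∑ z : ZMod K, (cC z : ℂ) * e (u * (z - q w)) := by
            refine Finset.sum_congr rfl (fun w _ => ?_)
            show e ((-u) * q w) * (∑ z : ZMod K, (cC z : ℂ) * e (u * z)) = _
            rw [Finset.mul_sum]
            refine Finset.sum_congr rfl (fun z _ => ?_)
            rw [← mul_assoc, mul_comm (e ((-u) * q w)), mul_assoc, ← headd]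
            congr 2
            ring
        _ = ∑ w ∈ S, ∑ z : ZMod K, (cC (z + q w) : ℂ) * e (u * z) := by
            refine Finset.sum_congr rfl (fun w _ => ?_)
            exact (Fintype.sum_equiv (Equiv.addRight (q w))
              (fun z => (cC (z + q w) : ℂ) * e (u * z))
              (fun z => (cC z : ℂ) * e (u * (z - q w)))
              (fun x => by simp [add_sub_cancel_right])).symm
        _ = ∑ z : ZMod K, ∑ w ∈ S, (cC (z + q w) : ℂ) * e (u * z) := Finset.sum_comm
        _ = ∑ z : ZMod K, (N : ℂ) * e (u * z) := by
            refine Finset.sum_congr rfl (fun z _ => ?_)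
            rw [← Finset.sum_mul]
            congr 1
            have := hconv z
            exact_mod_cast congrArg (fun x : ℕ => (x : ℂ)) this
        _ = (N : ℂ) * ∑ z : ZMod K, e (u * z) := by rw [Finset.mul_sum]
    have hSC : ∀ u : ZMod K, u ≠ 0 → Su (-u) * cHat u = 0 := by
      intro u hu
      rw [hkey2 u]
      have h1 : ∑ z : ZMod K, e (u * z) = 0 := by
        rw [Finset.sum_congr rfl (fun z _ => by rw [mul_comm])]
        rw [horto u, if_neg hu]
      rw [h1, mul_zero]
    -- the crucial dichotomy : Su does not vanish
    have hSne : ∀ u : ZMod K, u ≠ 0 → Su u ≠ 0 := by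
      intro u hu hSu0
      obtain ⟨s₀, hs₀S, hqs₀⟩ := hinvol
      have hkey := key_vanish p k hp hk1 hζ (S.val.map (fun w => u * q w)) ?_ ?_ ?_
      rotate_left
      · rw [Multiset.card_map]
        exact hcard
      · rw [Multiset.map_map]
        exact hSu0
      · exact Multiset.mem_map.mpr ⟨s₀, Finset.mem_def.mp hs₀S, by rw [hqs₀, mul_zero]⟩
      obtain ⟨hnodup, hdiv⟩ := hkey
      have hane : u.val ≠ 0 := fun h => hu ((ZMod.val_eq_zero u).mp h)
      have haK : u.val < K := ZMod.val_lt u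
      set a := u.val with hadef
      set j := a.factorization p with hjdef
      have hja : p ^ j ∣ a := Nat.ordProj_dvd _ _
      have hjk : j < k := by
        by_contra hcon
        push_neg at hcon
        have h1 : K ∣ a := by
          rw [hKdef]
          exact dvd_trans (pow_dvd_pow p hcon) hja
        have := Nat.le_of_dvd (Nat.pos_of_ne_zero hane) h1
        omega
      set b := a / p ^ j with hbdef
      have hab : p ^ j * b = a := Nat.ordProj_mul_ordCompl_eq_self a p
      have hpb : ¬ p ∣ b := Nat.not_dvd_ordCompl hp hane
      rcases Nat.lt_or_ge j (k - 1) with hjlt | hjge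
      · -- low valuation : every element of S lies in a proper subgroup
        have hdvdall : ∀ w ∈ S, p ∣ (w t).val := by
          intro w hw
          have hmem : u * q w ∈ S.val.map (fun w => u * q w) :=
            Multiset.mem_map_of_mem _ (Finset.mem_def.mp hw)
          have h1 : p ^ (k - 1) ∣ (u * q w).val := hdiv _ hmem
          rw [ZMod.val_mul] at h1
          have h2 : p ^ (k - 1) ∣ a * (q w).val :=
            (Nat.dvd_mod_iff (by rw [hKdef]; exact pow_dvd_pow p (by omega))).mp h1
          have h3 : p ^ j * p ^ (k - 1 - j) ∣ p ^ j * (b * (q w).val) := by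
            have hexp : j + (k - 1 - j) = k - 1 := by omega
            rw [← pow_add, hexp, ← mul_assoc, hab]
            exact h2
          have h4 : p ^ (k - 1 - j) ∣ b * (q w).val :=
            (Nat.mul_dvd_mul_iff_left (Nat.pos_of_ne_zero (pow_ne_zero j hp.pos.ne'))).mp h3
          have hcop : Nat.Coprime (p ^ (k - 1 - j)) b :=
            Nat.Coprime.pow_left _ ((Nat.Prime.coprime_iff_not_dvd hp).mpr hpb)
          have h5 : p ^ (k - 1 - j) ∣ (q w).val := hcop.dvd_of_dvd_mul_left h4
          have h6 : p ∣ (q w).val :=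
            dvd_trans (dvd_pow_self p (by omega : k - 1 - j ≠ 0)) h5
          rw [hqval] at h6
          exact (Nat.dvd_mod_iff hpK).mp h6
        have hle : AddSubgroup.closure (S : Set (∀ i, ZMod (n i))) ≤ φ.ker := by
          rw [AddSubgroup.closure_le]
          intro x hx
          show φ x = 0
          rw [hφval]
          exact (ZMod.natCast_eq_zero_iff _ _).mpr (hdvdall x hx)
        rw [hgen] at hle
        haveI : Fact (1 < n t) := ⟨by have := hn t; omega⟩
        set xstar : (∀ i, ZMod (n i)) := fun i => if i = t then 1 else 0 with hxdef
        have hx1 : φ xstar = 1 := by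
          rw [hφval]
          have hxt : xstar t = 1 := if_pos rfl
          rw [hxt, ZMod.val_one, Nat.cast_one]
        have h01 : (1 : ZMod p) = 0 := by
          have hmem := hle (AddSubgroup.mem_top xstar)
          rw [AddMonoidHom.mem_ker] at hmem
          rw [← hx1]
          exact hmem
        have hpd1 : (p : ℕ) ∣ 1 :=
          (ZMod.natCast_eq_zero_iff 1 p).mp (by exact_mod_cast h01)
        have := Nat.le_of_dvd one_pos hpd1
        have := hp.one_lt
        omega
      · -- j = k - 1 : contradiction with nodup and hmod
        have heqq : u * q s = u * q s' := by
          rw [hqnat, hqnat]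
          have hu' : u = ((a : ℕ) : ZMod K) := (ZMod.natCast_zmod_val u).symm
          rw [hu', ← Nat.cast_mul, ← Nat.cast_mul]
          rw [ZMod.natCast_eq_natCast_iff]
          rw [Nat.modEq_iff_dvd]
          have hd1 : (p : ℤ) ∣ ((s' t).val : ℤ) - ((s t).val : ℤ) := Nat.modEq_iff_dvd.mp hmod
          have hd2 : ((p : ℤ)) ^ (k - 1) ∣ (a : ℤ) := by
            have h9 : p ^ (k - 1) ∣ a := by
              have : j = k - 1 := by omega
              rw [← this]
              exact hja
            exact_mod_cast h9
          have hfac : (K : ℤ) = (p : ℤ) ^ (k - 1) * (p : ℤ) := by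
            rw [hKdef]
            push_cast
            rw [← pow_succ]
            congr 1
            omega
          rw [hfac]
          push_cast
          have hring : (a : ℤ) * ((s' t).val : ℤ) - (a : ℤ) * ((s t).val : ℤ)
              = (a : ℤ) * (((s' t).val : ℤ) - ((s t).val : ℤ)) := by ring
          rw [hring]
          exact mul_dvd_mul hd2 hd1
        exact hne (Multiset.inj_on_of_nodup_map hnodup s (Finset.mem_def.mp hs)
          s' (Finset.mem_def.mp hs') heqq)
    -- cHat vanishes away from 0
    have hcHat0 : ∀ u : ZMod K, u ≠ 0 → cHat u = 0 := by
      intro u hu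
      rcases mul_eq_zero.mp (hSC u hu) with h | h
      · exact absurd h (hSne (-u) (neg_ne_zero.mpr hu))
      · exact h
    -- Fourier inversion : cC is constant
    have hconst : ∀ z₀ : ZMod K, (K : ℂ) * (cC z₀ : ℂ) = cHat 0 := by
      intro z₀
      have hlhs : ∑ u : ZMod K, cHat u * e (u * (-z₀)) = cHat 0 := by
        rw [Finset.sum_eq_single 0]
        · rw [zero_mul, he0, mul_one]
        · intro u _ hu
          rw [hcHat0 u hu, zero_mul]
        · intro h
          exact absurd (Finset.mem_univ 0) h
      have hrhs : ∑ u : ZMod K, cHat u * e (u * (-z₀)) = (K : ℂ) * (cC z₀ : ℂ) := by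
        calc ∑ u : ZMod K, cHat u * e (u * (-z₀))
            = ∑ u : ZMod K, ∑ z : ZMod K, (cC z : ℂ) * e (u * (z - z₀)) := by
              refine Finset.sum_congr rfl (fun u _ => ?_)
              show (∑ z : ZMod K, (cC z : ℂ) * e (u * z)) * e (u * (-z₀)) = _
              rw [Finset.sum_mul]
              refine Finset.sum_congr rfl (fun z _ => ?_)
              rw [mul_assoc, ← headd]
              congr 2
              ring
          _ = ∑ z : ZMod K, ∑ u : ZMod K, (cC z : ℂ) * e (u * (z - z₀)) := Finset.sum_comm
          _ = ∑ z : ZMod K, (cC z : ℂ) * (if z - z₀ = 0 then (K : ℂ) else 0) := by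
              refine Finset.sum_congr rfl (fun z _ => ?_)
              rw [← Finset.mul_sum, horto]
          _ = (K : ℂ) * (cC z₀ : ℂ) := by
              rw [Finset.sum_eq_single z₀]
              · rw [if_pos (sub_self z₀)]
                ring
              · intro z _ hz
                rw [if_neg (fun h => hz (sub_eq_zero.mp h)), mul_zero]
              · intro h
                exact absurd (Finset.mem_univ z₀) h
      rw [← hrhs, hlhs]
    have hceq : ∀ z : ZMod K, cC z = cC 0 := by
      intro z
      have h1 : (K : ℂ) * (cC z : ℂ) = (K : ℂ) * (cC 0 : ℂ) := by
        rw [hconst, hconst]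
      have hKne' : (K : ℂ) ≠ 0 := Nat.cast_ne_zero.mpr (NeZero.ne K)
      exact_mod_cast mul_left_cancel₀ hKne' h1
    have hNp : N = p * cC 0 := by
      have h1 := hconv 0
      rw [Finset.sum_congr rfl (fun w _ => hceq (0 + q w)), Finset.sum_const, hcard,
        smul_eq_mul] at h1
      omega
    have hdvdG : p ^ (k + 1) ∣ Fintype.card (∀ i, ZMod (n i)) := by
      rw [hcardG, hNp]
      obtain ⟨m, hm⟩ : ∃ m, cC 0 = m := ⟨_, rfl⟩
      rw [hm, hKdef]
      exact ⟨m, by ring⟩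
    have hGprod : Fintype.card (∀ i, ZMod (n i)) = ∏ i, n i := by
      rw [Fintype.card_pi]
      exact Finset.prod_congr rfl (fun i _ => ZMod.card (n i))
    have hfact : (∏ i, n i).factorization p = k := by
      rw [Nat.factorization_prod (fun i _ => by have := hn i; omega)]
      rw [Finsupp.finset_sum_apply]
      rw [Finset.sum_eq_single t]
      · intro i _ hit
        exact Nat.factorization_eq_zero_of_not_dvd (fun hdvd => hit (huniq i hdvd))
      · intro h
        exact absurd (Finset.mem_univ t) h
    have hprodne : (∏ i, n i) ≠ 0 := by
      apply Finset.prod_ne_zero_iff.mpr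
      intro i _
      have := hn i
      omega
    rw [hGprod] at hdvdG
    have hle2 := (Nat.Prime.pow_dvd_iff_le_factorization hp hprodne).mp hdvdG
    rw [hfact] at hle2
    omega
  · -- easy direction
    intro hdist
    have hφinjS : ∀ s ∈ S, ∀ s' ∈ S, φ s = φ s' → s = s' := by
      intro s hs s' hs' hφe
      by_contra hne
      exact hdist s hs s' hs' hne ((hφmod s s').mp hφe)
    have himg : S.image (fun s => φ s) = Finset.univ := by
      apply Finset.eq_univ_of_card
      rw [Finset.card_image_of_injOn (fun a ha b hb => hφinjS a ha b hb), hcard, ZMod.card]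
    refine ⟨{x | φ x = 0}, fun v => ?_⟩
    have hmem : -φ v ∈ S.image (fun s => φ s) := by
      rw [himg]; exact Finset.mem_univ _
    obtain ⟨s, hsS, hsv⟩ := Finset.mem_image.mp hmem
    refine ⟨v + s, ⟨?_, ?_⟩, ?_⟩
    · show φ (v + s) = 0
      rw [map_add, hsv]
      ring
    · rw [hAdj]
      simpa using hsS
    · rintro c ⟨hcC, hcadj⟩
      rw [hAdj] at hcadj
      have h1 : φ (c - v) = -φ v := by
        have h2 : φ c = 0 := hcC
        rw [map_sub, h2]
        ring
      have h3 : c - v = s := hφinjS _ hcadj _ hsS (h1.trans hsv.symm)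
      rw [← h3]
      abel
end

section
/- Let G be a finite abelian group, let S be a nonempty inverse-closed proper subset of G∖{0} with ⟨S⟩ = G, and let H = G_{S₀} be the subgroup of periods of S₀ = S ∪ {0}. Then Cay(G, S) admits a perfect code if and only if Cay(G/H, (S/H)∖{H}) admits a perfect code. Moreover, for any perfect code X in Cay(G, S), X/H is a perfect code in Cay(G/H, (S/H)∖{H}); conversely, any perfect code X/H in Cay(G/H, (S/H)∖{H}) gives rise to exactly |H|^k perfect codes in Cay(G, S), each formed by taking exactly one element from each coset of H contained in X/H, where k = |X/H|. -/
section helpers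
variable {G : Type*} [AddCommGroup G]

lemma cayley_adj {S : Set G} (h0 : (0:G) ∉ S) (hinv : ∀ s ∈ S, -s ∈ S)
    {x y : G} : (cayley S).Adj x y ↔ y - x ∈ S := by
  constructor
  · rintro ⟨hne, h | h⟩
    · exact h
    · simpa using hinv _ h
  · intro h
    refine ⟨?_, Or.inl h⟩
    rintro rfl
    simp at h
    exact h0 h

lemma code_iff {S : Set G} (h0 : (0:G) ∉ S) (hinv : ∀ s ∈ S, -s ∈ S) (C : Set G) :
    IsPerfectCode (cayley S) C ↔ ∀ v, ∃! c, c ∈ C ∧ v - c ∈ insert 0 S := by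
  constructor
  · rintro ⟨hind, hdom⟩ v
    by_cases hv : v ∈ C
    · refine ⟨v, ⟨hv, by simp⟩, ?_⟩
      rintro c ⟨hc, hcs⟩
      rcases Set.mem_insert_iff.mp hcs with h | h
      · exact (sub_eq_zero.mp h).symm
      · exact absurd ((cayley_adj h0 hinv).mpr h) (hind c hc v hv)
    · obtain ⟨c, ⟨hc, hadj⟩, hu⟩ := hdom v hv
      have hvc : v - c ∈ S := by
        have := (cayley_adj h0 hinv).mp hadj
        simpa using hinv _ this
      refine ⟨c, ⟨hc, Set.mem_insert_iff.mpr (Or.inr hvc)⟩, ?_⟩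
      rintro c' ⟨hc', hcs'⟩
      rcases Set.mem_insert_iff.mp hcs' with h | h
      · exact absurd (sub_eq_zero.mp h ▸ hc') hv
      · exact hu c' ⟨hc', (cayley_adj h0 hinv).mpr (by simpa using hinv _ h)⟩
  · intro h
    constructor
    · intro x hx y hy hadj
      have hyx : y - x ∈ S := (cayley_adj h0 hinv).mp hadj
      obtain ⟨c, _, hu⟩ := h y
      have h1 : x = c := hu x ⟨hx, Set.mem_insert_iff.mpr (Or.inr hyx)⟩
      have h2 : y = c := hu y ⟨hy, by simp⟩
      exact hadj.ne (h1.trans h2.symm)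
    · intro v hv
      obtain ⟨c, ⟨hc, hcs⟩, hu⟩ := h v
      have hvc : v - c ∈ S := by
        rcases Set.mem_insert_iff.mp hcs with h1 | h1
        · exact absurd (sub_eq_zero.mp h1 ▸ hc) hv
        · exact h1
      refine ⟨c, ⟨hc, (cayley_adj h0 hinv).mpr (by simpa using hinv _ hvc)⟩, ?_⟩
      rintro c' ⟨hc', hadj'⟩
      have : v - c' ∈ S := by
        have := (cayley_adj h0 hinv).mp hadj'
        simpa using hinv _ this
      exact hu c' ⟨hc', Set.mem_insert_iff.mpr (Or.inr this)⟩

lemma mem_key (S : Set G) (x : G) :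
    (QuotientAddGroup.mk x : G ⧸ periods (insert 0 S)) ∈
      insert 0 (((QuotientAddGroup.mk : G → G ⧸ periods (insert 0 S)) '' S) \ {0}) ↔
    x ∈ insert 0 S := by
  rw [Set.insert_diff_singleton, ← QuotientAddGroup.mk_zero, ← Set.image_insert_eq]
  constructor
  · rintro ⟨s, hs, heq⟩
    have hmem : -s + x ∈ periods (insert 0 S) := (QuotientAddGroup.eq).mp heq
    have := (hmem s)
    rw [add_comm s (-s + x)] at this
    simp only [add_assoc] at this
    simpa using this.mpr hs
  · exact fun hx => Set.mem_image_of_mem _ hx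
end helpers

/-- Lemma 4.12 (the reduction lemma): let `G` be a finite abelian group, `S` a
nonempty inverse-closed proper subset of `G ∖ {0}` generating `G`, and
`H = G_{S₀}` the subgroup of periods of `S₀ = S ∪ {0}`. Then `Cay(G, S)` admits a
perfect code iff `Cay(G/H, (S/H) ∖ {H})` does; every perfect code `X` of
`Cay(G, S)` projects to a perfect code `X/H` of the quotient graph; and every
perfect code `Y` of the quotient graph gives rise to exactly `|H|^{|Y|}` perfect
codes of `Cay(G, S)`, namely the sets obtained by choosing exactly one element
from each coset of `H` contained in `Y`. -/
theorem perfectCode_reduction {G : Type*} [AddCommGroup G] [Fintype G]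
    (S : Set G) (hne : S.Nonempty) (h0 : (0 : G) ∉ S)
    (hproper : S ≠ {x : G | x ≠ 0})
    (hinv : ∀ s ∈ S, -s ∈ S) (hgen : AddSubgroup.closure S = ⊤) :
    ((∃ C : Set G, IsPerfectCode (cayley S) C) ↔
      ∃ D : Set (G ⧸ periods (insert 0 S)),
        IsPerfectCode
          (cayley (((QuotientAddGroup.mk : G → G ⧸ periods (insert 0 S)) '' S) \ {0}))
          D) ∧
    (∀ X : Set G, IsPerfectCode (cayley S) X →
      IsPerfectCode
        (cayley (((QuotientAddGroup.mk : G → G ⧸ periods (insert 0 S)) '' S) \ {0}))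
        ((QuotientAddGroup.mk : G → G ⧸ periods (insert 0 S)) '' X)) ∧
    (∀ Y : Set (G ⧸ periods (insert 0 S)),
      IsPerfectCode
        (cayley (((QuotientAddGroup.mk : G → G ⧸ periods (insert 0 S)) '' S) \ {0}))
        Y →
      (∀ X : Set G,
        ((QuotientAddGroup.mk : G → G ⧸ periods (insert 0 S)) '' X = Y ∧
          ∀ x ∈ X, ∀ x' ∈ X,
            (QuotientAddGroup.mk x : G ⧸ periods (insert 0 S)) =
              QuotientAddGroup.mk x' → x = x') →
        IsPerfectCode (cayley S) X) ∧
      {X : Set G |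
          (QuotientAddGroup.mk : G → G ⧸ periods (insert 0 S)) '' X = Y ∧
          ∀ x ∈ X, ∀ x' ∈ X,
            (QuotientAddGroup.mk x : G ⧸ periods (insert 0 S)) =
              QuotientAddGroup.mk x' → x = x'}.ncard =
        Nat.card (periods (insert 0 S)) ^ Y.ncard) := by
  classical
  set H := periods (insert 0 S) with hHdef
  set π : G → G ⧸ H := QuotientAddGroup.mk with hπ
  set T : Set (G ⧸ H) := (π '' S) \ {0} with hT
  have hT0 : (0 : G ⧸ H) ∉ T := fun h => h.2 rfl
  have hTinv : ∀ t ∈ T, -t ∈ T := by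
    rintro t ⟨⟨s, hs, rfl⟩, ht⟩
    refine ⟨⟨-s, hinv s hs, by simp [π]⟩, ?_⟩
    simp only [Set.mem_singleton_iff, neg_eq_zero]
    exact fun h => ht h
  have key : ∀ x : G, π x ∈ insert 0 T ↔ x ∈ insert 0 S := fun x => mem_key S x
  -- projection
  have proj : ∀ X : Set G, IsPerfectCode (cayley S) X →
      IsPerfectCode (cayley T) (π '' X) := by
    intro X hX
    rw [code_iff h0 hinv] at hX
    rw [code_iff hT0 hTinv]
    intro v
    obtain ⟨w, rfl⟩ := QuotientAddGroup.mk_surjective v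
    obtain ⟨c, ⟨hc, hcs⟩, hu⟩ := hX w
    refine ⟨π c, ⟨Set.mem_image_of_mem π hc, ?_⟩, ?_⟩
    · have := (key (w - c)).2 hcs
      simpa [π] using this
    · rintro d ⟨⟨c', hc', rfl⟩, hd⟩
      have : w - c' ∈ insert 0 S := (key (w - c')).1 (by simpa [π] using hd)
      exact congrArg π (hu c' ⟨hc', this⟩)
  -- lifting
  have lift : ∀ Y : Set (G ⧸ H), IsPerfectCode (cayley T) Y →
      ∀ X : Set G, (π '' X = Y ∧ ∀ x ∈ X, ∀ x' ∈ X, π x = π x' → x = x') →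
      IsPerfectCode (cayley S) X := by
    rintro Y hY X ⟨hXY, hinj⟩
    rw [code_iff hT0 hTinv] at hY
    rw [code_iff h0 hinv]
    intro v
    obtain ⟨d, ⟨hdY, hds⟩, hu⟩ := hY (π v)
    rw [← hXY] at hdY
    obtain ⟨c, hcX, rfl⟩ := hdY
    refine ⟨c, ⟨hcX, (key (v - c)).1 (by simpa [π] using hds)⟩, ?_⟩
    rintro c' ⟨hc', hcs'⟩
    have h1 : π c' = π c := by
      refine hu (π c') ⟨hXY ▸ Set.mem_image_of_mem π hc', ?_⟩
      have := (key (v - c')).2 hcs'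
      simpa [π] using this
    exact hinj c' hc' c hcX h1
  -- counting (no perfect-code hypothesis needed)
  have count : ∀ Y : Set (G ⧸ H),
      {X : Set G | π '' X = Y ∧ ∀ x ∈ X, ∀ x' ∈ X, π x = π x' → x = x'}.ncard
        = Nat.card H ^ Y.ncard := by
    intro Y
    have fiber_equiv : ∀ q : G ⧸ H, {g : G // π g = q} ≃ H := by
      intro q
      refine
        { toFun := fun g => ⟨(g : G) - q.out, ?_⟩
          invFun := fun h => ⟨q.out + (h : G), ?_⟩
          left_inv := fun g => by ext; simp
          right_inv := fun h => by ext; simp }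
      · have : π q.out = q := QuotientAddGroup.out_eq' q
        have h2 : π q.out = π (g : G) := this.trans g.2.symm
        have := (QuotientAddGroup.eq).mp h2
        simpa [sub_eq_add_neg, add_comm] using this
      · have : π q.out = q := QuotientAddGroup.out_eq' q
        calc π (q.out + (h : G)) = π q.out + π (h : G) := by simp [π]
        _ = q := by
            rw [this]
            have : π (h : G) = 0 := (QuotientAddGroup.eq_zero_iff _).mpr h.2
            rw [this, add_zero]
    -- the bijection between lifts and choice functions
    set P : Set (Set G) :=
      {X : Set G | π '' X = Y ∧ ∀ x ∈ X, ∀ x' ∈ X, π x = π x' → x = x'} with hP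
    have hbij : ∃ Φ : (∀ y : Y, {g : G // π g = (y : G ⧸ H)}) → P, Function.Bijective Φ := by
      refine ⟨fun f => ⟨Set.range (fun y => ((f y : G))), ?_, ?_⟩, ?_, ?_⟩
      · ext q
        constructor
        · rintro ⟨g, ⟨y, rfl⟩, rfl⟩
          have := (f y).2
          rw [this]; exact y.2
        · intro hq
          exact ⟨(f ⟨q, hq⟩ : G), ⟨⟨q, hq⟩, rfl⟩, (f ⟨q, hq⟩).2⟩
      · rintro x ⟨y, rfl⟩ x' ⟨y', rfl⟩ heq
        have h1 : (y : G ⧸ H) = (y' : G ⧸ H) := by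
          rw [← (f y).2, ← (f y').2]; exact heq
        have : y = y' := Subtype.ext h1
        rw [this]
      · -- injective
        intro f f' heq
        have hr : Set.range (fun y : Y => ((f y : G))) =
            Set.range (fun y : Y => ((f' y : G))) := congrArg Subtype.val heq
        funext y
        have : ((f y : G)) ∈ Set.range (fun y : Y => ((f' y : G))) := by
          rw [← hr]; exact ⟨y, rfl⟩
        obtain ⟨y', hy'⟩ := this
        have hy2 : ((f' y' : G)) = (f y : G) := hy'
        have hyy : y' = y := by
          apply Subtype.ext
          rw [← (f' y').2, hy2, (f y).2]
        exact Subtype.ext (by rw [← hy', hyy])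
      · -- surjective
        rintro ⟨X, hXY, hinj⟩
        have ex : ∀ y : Y, ∃ g, g ∈ X ∧ π g = (y : G ⧸ H) := by
          intro y
          have : (y : G ⧸ H) ∈ π '' X := hXY ▸ y.2
          obtain ⟨g, hg, hgy⟩ := this
          exact ⟨g, hg, hgy⟩
        refine ⟨fun y => ⟨Classical.choose (ex y), (Classical.choose_spec (ex y)).2⟩, ?_⟩
        apply Subtype.ext
        show Set.range _ = X
        ext x
        constructor
        · rintro ⟨y, rfl⟩
          exact (Classical.choose_spec (ex y)).1
        · intro hx
          have hπx : π x ∈ Y := hXY ▸ Set.mem_image_of_mem π hx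
          refine ⟨⟨π x, hπx⟩, ?_⟩
          exact hinj _ (Classical.choose_spec (ex ⟨π x, hπx⟩)).1 x hx
            (Classical.choose_spec (ex ⟨π x, hπx⟩)).2
    obtain ⟨Φ, hΦ⟩ := hbij
    have hfin : Y.Finite := Set.toFinite Y
    haveI : Finite (Y : Set (G ⧸ H)) := hfin
    have hcard : Nat.card (∀ y : Y, {g : G // π g = (y : G ⧸ H)}) = P.ncard := by
      rw [← Nat.card_coe_set_eq]
      exact Nat.card_eq_of_bijective Φ hΦ
    rw [← hcard]
    have : Nat.card (∀ y : Y, {g : G // π g = (y : G ⧸ H)})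
        = Nat.card (Y → H) := by
      exact Nat.card_congr (Equiv.piCongrRight (fun y => fiber_equiv (y : G ⧸ H)))
    rw [this, Nat.card_fun, Nat.card_coe_set_eq]
  refine ⟨⟨?_, ?_⟩, proj, fun Y hY => ⟨lift Y hY, count Y⟩⟩
  · rintro ⟨C, hC⟩
    exact ⟨π '' C, proj C hC⟩
  · rintro ⟨D, hD⟩
    refine ⟨(fun q => (q : G ⧸ H).out) '' D, lift D hD _ ⟨?_, ?_⟩⟩
    · ext q
      constructor
      · rintro ⟨g, ⟨d, hd, rfl⟩, rfl⟩
        show π (Quotient.out d) ∈ D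
        rw [show π (Quotient.out d) = d from QuotientAddGroup.out_eq' d]
        exact hd
      · intro hq
        exact ⟨q.out, ⟨q, hq, rfl⟩, QuotientAddGroup.out_eq' q⟩
    · rintro x ⟨d, hd, rfl⟩ x' ⟨d', hd', rfl⟩ heq
      have hdd : d = d' := by
        rw [← QuotientAddGroup.out_eq' d, ← QuotientAddGroup.out_eq' d']
        exact heq
      show Quotient.out d = Quotient.out d'
      rw [hdd]
end
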